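/- arXiv:2101.05354 — 6 statements merged into one kernel-verified Lean document; each statement's English description precedes it below -/
import Mathlib

section
/- For all r, A ∈ ℕ and ε, η > 0 there exists N ∈ ℕ such that the following holds. Suppose n = n_1 + ⋯ + n_r ≥ N, the vector (n_1,…,n_r) is A-balanced, Λ is connected and ε-separated, and ρ(M) ≤ 1 − ε. Then with probability at least 1 − η, every connected component of G ∼ G(n⃗,P) has at most η·n vertices. -/
/-!
The probability that `u` is reachable from `v` is at most the sum, over self-avoiding paths
`v = x₀, x₁, …, x_ℓ = u`, of `∏ p(xₖ, xₖ₊₁)`. Summing over `u` and `v`, the expected value of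
`∑_v |C(v)|` is at most `∑_ℓ ∑_i nᵢ (Mˡ 1)ᵢ`. Since `M = D^{-1/2} Λ D^{1/2}` with `D = diag(n)`,
this is `∑_ℓ ⟨√n, Λˡ √n⟩`. For a symmetric matrix with nonnegative entries, `|⟨x, Λx⟩| ≤ ⟨|x|, Λ|x|⟩`,
so the operator norm of `Λ` is at most its largest eigenvalue `ρ(M) ≤ 1 - ε`, and the expectation
is at most `n / ε`. A component with more than `ηn` vertices contributes more than `(ηn)²` to
`∑_v |C(v)|`, so by Markov's inequality it exists with probability at most `1 / (ε η² n) ≤ η`.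
-/

open MeasureTheory Matrix

namespace Pandemic

variable {r : ℕ}

/-- The vertex set: `n i` vertices of each type `i`. -/
abbrev Vert (n : Fin r → ℕ) : Type := (i : Fin r) × Fin (n i)

/-- The largest (real) eigenvalue of a matrix. -/
noncomputable def maxEig (M : Matrix (Fin r) (Fin r) ℝ) : ℝ :=
  sSup {t : ℝ | Module.End.HasEigenvalue (Matrix.toLin' M) t}

/-- `(n_1,…,n_r)` is `A`-balanced if `n i ≤ A * n j` for all `i, j`. -/
def Balanced (A : ℕ) (n : Fin r → ℕ) : Prop := ∀ i j, n i ≤ A * n j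

/-- `Λ` is `ε`-separated: every entry is `0` or lies in `[ε, 1/ε]`. -/
def Separated (ε : ℝ) (Λ : Matrix (Fin r) (Fin r) ℝ) : Prop :=
  ∀ i j, Λ i j = 0 ∨ (ε ≤ Λ i j ∧ Λ i j ≤ 1 / ε)

/-- The graph on types: `i ~ j` iff `Λ i j > 0` (symmetrized). -/
def typeGraph (Λ : Matrix (Fin r) (Fin r) ℝ) : SimpleGraph (Fin r) where
  Adj i j := i ≠ j ∧ (0 < Λ i j ∨ 0 < Λ j i)
  symm := by
    constructor
    intro i j h
    exact ⟨h.1.symm, h.2.symm⟩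
  loopless := by constructor; intro i h; exact h.1 rfl

/-- `Λ` is connected if the graph on types with edges at positive entries is connected. -/
def ConnectedTypes (Λ : Matrix (Fin r) (Fin r) ℝ) : Prop := (typeGraph Λ).Connected

/-- The matrix of infection probabilities `p i j = Λ i j / √(n i * n j)`. -/
noncomputable def pMat (n : Fin r → ℕ) (Λ : Matrix (Fin r) (Fin r) ℝ) :
    Matrix (Fin r) (Fin r) ℝ :=
  fun i j => Λ i j / Real.sqrt ((n i : ℝ) * (n j : ℝ))

/-- The descendants matrix `M i j = p i j * n j`. -/
noncomputable def mMat (n : Fin r → ℕ) (Λ : Matrix (Fin r) (Fin r) ℝ) :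
    Matrix (Fin r) (Fin r) ℝ :=
  fun i j => pMat n Λ i j * (n j : ℝ)

/-- The product Bernoulli measure on edge-indicators: the (unordered) pair `{u, v}`
is an edge independently with probability `p (type u) (type v)`. -/
noncomputable def graphMeasure (n : Fin r → ℕ) (p : Fin r → Fin r → ℝ) :
    Measure (Sym2 (Vert n) → Bool) :=
  Measure.pi fun s =>
    (PMF.bernoulli (min (Real.toNNReal (p (Quot.out s).1.1 (Quot.out s).2.1)) 1)
      (min_le_right _ _)).toMeasure

/-- The graph determined by an edge-indicator function. -/
def graphOf {n : Fin r → ℕ} (ω : Sym2 (Vert n) → Bool) : SimpleGraph (Vert n) where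
  Adj u v := u ≠ v ∧ ω s(u, v) = true
  symm := by
    constructor
    intro u v h
    exact ⟨h.1.symm, by rw [Sym2.eq_swap]; exact h.2⟩
  loopless := by constructor; intro u h; exact h.1 rfl

/-- The number of vertices in the connected component of `v`. -/
noncomputable def compSize {n : Fin r → ℕ} (ω : Sym2 (Vert n) → Bool) (v : Vert n) : ℕ :=
  {u | (graphOf ω).Reachable v u}.ncard

/-- The Euclidean norm on `ℝ^r`. -/
noncomputable def euclNorm (z : Fin r → ℝ) : ℝ := Real.sqrt (∑ i, z i ^ 2)

end Pandemic

open scoped ENNReal NNReal RealInnerProductSpace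

namespace Matrix

variable {ι : Type*} [Fintype ι] {A : Matrix ι ι ℝ} {c : ℝ}

theorem IsHermitian.dotProduct_mulVec_le [DecidableEq ι] (hA : A.IsHermitian)
    (hc : ∀ t ∈ spectrum ℝ A, t ≤ c) (x : ι → ℝ) : x ⬝ᵥ A *ᵥ x ≤ c * (x ⬝ᵥ x) := by
  have hpsd : (algebraMap ℝ _ c - A).PosSemidef := by
    rw [posSemidef_iff_isHermitian_and_spectrum_nonneg, ← spectrum.singleton_sub_eq]
    refine ⟨(isHermitian_diagonal _).sub hA, ?_⟩
    rintro _ ⟨_, rfl, t, ht, rfl⟩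
    exact sub_nonneg.2 (hc t ht)
  simpa [Algebra.algebraMap_eq_smul_one, sub_mulVec, dotProduct_sub, smul_mulVec] using
    hpsd.dotProduct_mulVec_nonneg x

theorem abs_dotProduct_mulVec_le (hA : ∀ i j, 0 ≤ A i j) (x : ι → ℝ) :
    |x ⬝ᵥ A *ᵥ x| ≤ |x| ⬝ᵥ A *ᵥ |x| := by
  simp only [dotProduct, mulVec, Finset.mul_sum]
  refine (Finset.abs_sum_le_sum_abs _ _).trans (Finset.sum_le_sum fun i _ => ?_)
  refine (Finset.abs_sum_le_sum_abs _ _).trans (Finset.sum_le_sum fun j _ => ?_)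
  simp [abs_mul, abs_of_nonneg (hA i j)]

end Matrix

theorem ContinuousLinearMap.norm_le_of_abs_inner_le {E : Type*} [NormedAddCommGroup E]
    [InnerProductSpace ℝ E] [Nontrivial E] {T : E →L[ℝ] E} (hT : (T : E →ₗ[ℝ] E).IsSymmetric)
    {c : ℝ} (hc : ∀ x, |⟪T x, x⟫| ≤ c * ‖x‖ ^ 2) : ‖T‖ ≤ c := by
  obtain ⟨x₀, hx₀⟩ := exists_ne (0 : E)
  have hc0 : 0 ≤ c := nonneg_of_mul_nonneg_left ((abs_nonneg _).trans (hc x₀)) (by positivity)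
  rw [T.norm_eq_iSup_rayleighQuotient hT]
  refine ciSup_le fun x => ?_
  rcases eq_or_ne x 0 with rfl | hx
  · simpa using hc0
  rw [ContinuousLinearMap.rayleighQuotient, abs_div, abs_sq, div_le_iff₀ (by positivity)]
  exact hc x

namespace Matrix.IsHermitian

variable {ι : Type*} [Fintype ι] [DecidableEq ι] [Nonempty ι] {A : Matrix ι ι ℝ} {c : ℝ}

theorem norm_toEuclideanCLM_le (hA : A.IsHermitian) (hnn : ∀ i j, 0 ≤ A i j)
    (hc : ∀ t ∈ spectrum ℝ A, t ≤ c) : ‖toEuclideanCLM (𝕜 := ℝ) A‖ ≤ c := by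
  refine ContinuousLinearMap.norm_le_of_abs_inner_le
    (isSymmetric_toEuclideanLin_iff.mpr hA) fun x => ?_
  have hnorm : ‖x‖ ^ 2 = |x.ofLp| ⬝ᵥ |x.ofLp| := by
    rw [EuclideanSpace.real_norm_sq_eq]
    simp [dotProduct, sq]
  rw [real_inner_comm, inner_toEuclideanCLM, hnorm]
  exact (abs_dotProduct_mulVec_le hnn _).trans (hA.dotProduct_mulVec_le hc _)

theorem dotProduct_pow_mulVec_le (hA : A.IsHermitian) (hnn : ∀ i j, 0 ≤ A i j)
    (hc : ∀ t ∈ spectrum ℝ A, t ≤ c) (ℓ : ℕ) (x : ι → ℝ) :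
    x ⬝ᵥ (A ^ ℓ *ᵥ x) ≤ c ^ ℓ * (x ⬝ᵥ x) := by
  set T := toEuclideanCLM (𝕜 := ℝ) A
  set y := WithLp.toLp 2 x
  have hT : ‖T ^ ℓ‖ ≤ c ^ ℓ :=
    (norm_pow_le T ℓ).trans (pow_le_pow_left₀ (norm_nonneg T) (hA.norm_toEuclideanCLM_le hnn hc) ℓ)
  have hy : x ⬝ᵥ x = ‖y‖ ^ 2 := by
    rw [← real_inner_self_eq_norm_sq, EuclideanSpace.inner_toLp_toLp, star_trivial]
  calc x ⬝ᵥ (A ^ ℓ *ᵥ x) = ⟪y, (T ^ ℓ) y⟫ := by rw [← map_pow, inner_toEuclideanCLM]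
    _ ≤ ‖y‖ * (‖T ^ ℓ‖ * ‖y‖) := (real_inner_le_norm _ _).trans (by gcongr; exact (T ^ ℓ).le_opNorm y)
    _ ≤ ‖y‖ * (c ^ ℓ * ‖y‖) := by gcongr
    _ = c ^ ℓ * (x ⬝ᵥ x) := by rw [hy]; ring

end Matrix.IsHermitian

theorem SimpleGraph.sq_ncard_reachable_le_sum {V : Type*} [Fintype V] (G : SimpleGraph V)
    (v : V) : {u | G.Reachable v u}.ncard ^ 2 ≤ ∑ w, {u | G.Reachable w u}.ncard := by
  classical
  set C := {u | G.Reachable v u}.toFinset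
  have hC : ∀ w ∈ C, {u | G.Reachable w u} = {u | G.Reachable v u} := fun w hw => by
    rw [Set.mem_toFinset, Set.mem_ofPred_eq] at hw
    ext u
    exact ⟨hw.trans, hw.symm.trans⟩
  calc {u | G.Reachable v u}.ncard ^ 2 = ∑ w ∈ C, {u | G.Reachable w u}.ncard := by
        rw [Finset.sum_congr rfl fun w hw => congrArg Set.ncard (hC w hw), Finset.sum_const,
          smul_eq_mul, Set.ncard_eq_toFinset_card', sq]
    _ ≤ ∑ w, {u | G.Reachable w u}.ncard := Finset.sum_le_sum_of_subset (Finset.subset_univ C)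

namespace Pandemic

section Paths

variable {V : Type*}

def pathEdges : V → List V → List (Sym2 V)
  | _, [] => []
  | v, w :: L => s(v, w) :: pathEdges w L

def pathWeight {R : Type*} [Monoid R] (W : Matrix V V R) : V → List V → R
  | _, [] => 1
  | v, w :: L => W v w * pathWeight W w L

theorem mem_of_mem_pathEdges {v x : V} {L : List V} {e : Sym2 V} (he : e ∈ pathEdges v L)
    (hx : x ∈ e) : x ∈ v :: L := by
  induction L generalizing v e with
  | nil => simp [pathEdges] at he
  | cons w L ih =>
    rcases List.mem_cons.1 he with rfl | he
    · rcases Sym2.mem_iff.1 hx with rfl | rfl <;> simp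
    · exact List.mem_cons_of_mem _ (ih he hx)

theorem nodup_pathEdges {v : V} {L : List V} (h : (v :: L).Nodup) : (pathEdges v L).Nodup := by
  induction L generalizing v with
  | nil => exact List.nodup_nil
  | cons w L ih =>
    rw [List.nodup_cons] at h
    exact List.nodup_cons.2
      ⟨fun hmem => h.1 (mem_of_mem_pathEdges hmem (Sym2.mem_mk_left v w)), ih h.2⟩

theorem isChain_iff_forall_mem_pathEdges (ω : Sym2 V → Bool) (v : V) (L : List V) :
    (v :: L).IsChain (fun a b => ω s(a, b) = true) ↔ ∀ e ∈ pathEdges v L, ω e = true := by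
  induction L generalizing v with
  | nil => simp [pathEdges]
  | cons w L ih => simp [List.isChain_cons_cons, pathEdges, ih]

theorem pathWeight_nonneg {W : Matrix V V ℝ} (hW : ∀ a b, 0 ≤ W a b) (v : V) (L : List V) :
    0 ≤ pathWeight W v L := by
  induction L generalizing v with
  | nil => exact zero_le_one
  | cons w L ih => exact mul_nonneg (hW v w) (ih w)

theorem sum_pathWeight_ofFn {R : Type*} [CommSemiring R] [Fintype V] [DecidableEq V]
    (W : Matrix V V R) (ℓ : ℕ) (v : V) :
    ∑ g : Fin ℓ → V, pathWeight W v (List.ofFn g) = (W ^ ℓ *ᵥ 1) v := by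
  induction ℓ generalizing v with
  | zero => simp [pathWeight]
  | succ ℓ ih =>
    rw [← (Fin.consEquiv fun _ => V).sum_comp, Fintype.sum_prod_type, pow_succ',
      ← mulVec_mulVec]
    simp [Fin.consEquiv, List.ofFn_succ, pathWeight, ← Finset.mul_sum, ih, mulVec, dotProduct]

theorem exists_nodup_isChain_of_reachable {G : SimpleGraph V} {v u : V} (h : G.Reachable v u) :
    ∃ L : List V, (v :: L).Nodup ∧ (v :: L).getLast (List.cons_ne_nil v L) = u ∧
      (v :: L).IsChain G.Adj := by
  classical
  obtain ⟨p, hp⟩ := h.some.toPath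
  refine ⟨p.support.tail, ?_, ?_, ?_⟩ <;> simp only [p.cons_tail_support]
  · exact hp.support_nodup
  · exact p.getLast_support
  · exact p.isChain_adj_support

end Paths

section EdgePercolation

variable {V : Type*} {μ : Measure (Sym2 V → Bool)} {q : Sym2 V → ℝ≥0∞} {W : Matrix V V ℝ}

theorem prod_pathEdges_le (hW0 : ∀ a b, 0 ≤ W a b)
    (hW : ∀ a b, q s(a, b) ≤ ENNReal.ofReal (W a b)) (v : V) (L : List V) :
    ((pathEdges v L).map q).prod ≤ ENNReal.ofReal (pathWeight W v L) := by
  induction L generalizing v with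
  | nil => simp [pathEdges, pathWeight]
  | cons w L ih =>
    rw [pathEdges, List.map_cons, List.prod_cons, pathWeight, ENNReal.ofReal_mul (hW0 v w)]
    exact mul_le_mul' (hW v w) (ih w)

variable [DecidableEq V]
  (hμ : ∀ S : Finset (Sym2 V), μ {ω | ∀ e ∈ S, ω e = true} ≤ ∏ e ∈ S, q e)
  (hW0 : ∀ a b, 0 ≤ W a b) (hW : ∀ a b, q s(a, b) ≤ ENNReal.ofReal (W a b))
include hμ hW0 hW

theorem measure_isChain_le {v : V} {L : List V} (hL : (v :: L).Nodup) :
    μ {ω | (v :: L).IsChain (fun a b => ω s(a, b) = true)}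
      ≤ ENNReal.ofReal (pathWeight W v L) := by
  simp_rw [isChain_iff_forall_mem_pathEdges, ← List.mem_toFinset (l := pathEdges v L)]
  refine (hμ _).trans ?_
  rw [List.prod_toFinset _ (nodup_pathEdges hL)]
  exact prod_pathEdges_le hW0 hW v L

variable [Fintype V] {G : (Sym2 V → Bool) → SimpleGraph V}
  (hG : ∀ ω a b, (G ω).Adj a b → ω s(a, b) = true)
include hG

theorem measure_reachable_le (v u : V) :
    μ {ω | (G ω).Reachable v u} ≤ ∑ ℓ ∈ Finset.range (Fintype.card V),
      ∑ g : Fin ℓ → V with (v :: List.ofFn g).getLast (List.cons_ne_nil _ _) = u,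
        ENNReal.ofReal (pathWeight W v (List.ofFn g)) := by
  set A : (ℓ : ℕ) → (Fin ℓ → V) → Set (Sym2 V → Bool) := fun ℓ g =>
    {ω | (v :: List.ofFn g).Nodup ∧ (v :: List.ofFn g).IsChain (fun a b => ω s(a, b) = true)}
  have hA : ∀ ℓ g, μ (A ℓ g) ≤ ENNReal.ofReal (pathWeight W v (List.ofFn g)) := by
    intro ℓ g
    by_cases hnd : (v :: List.ofFn g).Nodup
    · exact (measure_mono fun ω hω => hω.2).trans (measure_isChain_le hμ hW0 hW hnd)
    · simp only [A, hnd, false_and, Set.ofPred_false, measure_empty, zero_le]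
  have hcover : {ω | (G ω).Reachable v u} ⊆ ⋃ ℓ ∈ Finset.range (Fintype.card V),
      ⋃ g ∈ ({g | (v :: List.ofFn g).getLast (List.cons_ne_nil _ _) = u} : Finset (Fin ℓ → V)),
        A ℓ g := by
    intro ω hω
    obtain ⟨L, hnd, hlast, hchain⟩ := exists_nodup_isChain_of_reachable hω
    simp only [Set.mem_iUnion, Finset.mem_range, Finset.mem_filter_univ]
    refine ⟨L.length, ?_, L.get, ?_, ?_⟩
    · simpa using hnd.length_le_card
    · simpa only [List.ofFn_get] using hlast
    · rw [Set.mem_ofPred_eq, List.ofFn_get]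
      exact ⟨hnd, hchain.imp fun a b hab => hG ω a b hab⟩
  calc μ {ω | (G ω).Reachable v u} ≤ _ := measure_mono hcover
    _ ≤ _ := measure_biUnion_finset_le _ _
    _ ≤ _ := Finset.sum_le_sum fun ℓ _ =>
      (measure_biUnion_finset_le _ _).trans (Finset.sum_le_sum fun g _ => hA ℓ g)

theorem sum_measure_reachable_le (v : V) :
    ∑ u, μ {ω | (G ω).Reachable v u} ≤
      ∑ ℓ ∈ Finset.range (Fintype.card V), ENNReal.ofReal ((W ^ ℓ *ᵥ 1) v) := by
  refine (Finset.sum_le_sum fun u _ => measure_reachable_le hμ hW0 hW hG v u).trans_eq ?_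
  rw [Finset.sum_comm]
  refine Finset.sum_congr rfl fun ℓ _ => ?_
  rw [Finset.sum_fiberwise, ← sum_pathWeight_ofFn,
    ENNReal.ofReal_sum_of_nonneg fun g _ => pathWeight_nonneg hW0 v _]

end EdgePercolation

section Markov

variable {V Ω : Type*} [Fintype V] [MeasurableSpace Ω] [DiscreteMeasurableSpace Ω]
  (μ : Measure Ω) (G : Ω → SimpleGraph V)

theorem lintegral_sum_ncard_reachable :
    ∫⁻ ω, ∑ v, ({u | (G ω).Reachable v u}.ncard : ℝ≥0∞) ∂μ
      = ∑ v, ∑ u, μ {ω | (G ω).Reachable v u} := by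
  classical
  rw [lintegral_finsetSum _ fun v _ => Measurable.of_discrete]
  refine Finset.sum_congr rfl fun v _ => ?_
  simp_rw [Set.ncard_eq_toFinset_card', Set.toFinset_ofPred, Finset.card_filter, Nat.cast_sum]
  rw [lintegral_finsetSum _ fun u _ => Measurable.of_discrete]
  refine Finset.sum_congr rfl fun u _ => ?_
  rw [← lintegral_indicator_one MeasurableSet.of_discrete]
  congr 1 with ω
  simp [Set.indicator_apply]

theorem mul_measure_exists_lt_ncard_reachable_le {t : ℝ} (ht : 0 ≤ t) :
    ENNReal.ofReal (t ^ 2) * μ {ω | ∃ v, t < {u | (G ω).Reachable v u}.ncard}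
      ≤ ∫⁻ ω, ∑ v, ({u | (G ω).Reachable v u}.ncard : ℝ≥0∞) ∂μ := by
  refine (mul_le_mul_right (measure_mono fun ω hω => ?_) _).trans
    (mul_meas_ge_le_lintegral₀ Measurable.of_discrete.aemeasurable _)
  obtain ⟨v, hv⟩ := hω
  have hsq : t ^ 2 ≤ (({u | (G ω).Reachable v u}.ncard ^ 2 : ℕ) : ℝ) := by
    push_cast
    exact pow_le_pow_left₀ ht hv.le 2
  calc ENNReal.ofReal (t ^ 2) ≤ (({u | (G ω).Reachable v u}.ncard ^ 2 : ℕ) : ℝ≥0∞) := by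
        simpa using ENNReal.ofReal_le_ofReal hsq
    _ ≤ _ := by exact_mod_cast (G ω).sq_ncard_reachable_le_sum v

end Markov

variable {r : ℕ} {n : Fin r → ℕ} {Λ : Matrix (Fin r) (Fin r) ℝ}

noncomputable def sqrtDiag (hn : ∀ i, 0 < n i) : (Matrix (Fin r) (Fin r) ℝ)ˣ where
  val := diagonal fun i => √(n i)
  inv := diagonal fun i => (√(n i))⁻¹
  val_inv := by
    rw [diagonal_mul_diagonal, ← diagonal_one]
    exact congrArg diagonal <| funext fun i =>
      mul_inv_cancel₀ (Real.sqrt_pos.2 (Nat.cast_pos.2 (hn i))).ne'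
  inv_val := by
    rw [diagonal_mul_diagonal, ← diagonal_one]
    exact congrArg diagonal <| funext fun i =>
      inv_mul_cancel₀ (Real.sqrt_pos.2 (Nat.cast_pos.2 (hn i))).ne'

theorem mMat_eq_conj (hn : ∀ i, 0 < n i) :
    mMat n Λ = (↑(sqrtDiag hn)⁻¹ : Matrix (Fin r) (Fin r) ℝ) * Λ *
      (↑(sqrtDiag hn) : Matrix (Fin r) (Fin r) ℝ) := by
  ext i j
  have hi : 0 < √(n i : ℝ) := Real.sqrt_pos.2 (Nat.cast_pos.2 (hn i))
  have hj : 0 < √(n j : ℝ) := Real.sqrt_pos.2 (Nat.cast_pos.2 (hn j))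
  simp only [mMat, pMat, sqrtDiag, Units.inv_mk, diagonal_mul, mul_diagonal,
    Real.sqrt_mul (Nat.cast_nonneg _)]
  field_simp
  rw [Real.sq_sqrt (Nat.cast_nonneg _)]

theorem le_maxEig_mMat (hn : ∀ i, 0 < n i) {t : ℝ} (ht : t ∈ spectrum ℝ Λ) :
    t ≤ maxEig (mMat n Λ) := by
  have hset : {t | Module.End.HasEigenvalue (toLin' (mMat n Λ)) t} = spectrum ℝ Λ := by
    ext t
    rw [Set.mem_ofPred_eq, Module.End.hasEigenvalue_iff_mem_spectrum, spectrum_toLin',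
      mMat_eq_conj hn, spectrum.units_conjugate']
  have hfin := Module.End.finite_hasEigenvalue (toLin' (mMat n Λ))
  rw [hset] at hfin
  rw [maxEig, hset]
  exact le_csSup hfin.bddAbove ht

theorem sum_mul_mMat_pow_mulVec_one (hn : ∀ i, 0 < n i) (ℓ : ℕ) :
    ∑ i, (n i : ℝ) * (mMat n Λ ^ ℓ *ᵥ 1) i
      = (fun i => √(n i : ℝ)) ⬝ᵥ (Λ ^ ℓ *ᵥ fun i => √(n i : ℝ)) := by
  have hdiag : (diagonal fun i => √(n i : ℝ)) *ᵥ 1 = fun i => √(n i : ℝ) := by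
    ext i
    simp [mulVec_diagonal]
  rw [mMat_eq_conj hn, Units.conj_pow']
  simp only [← mulVec_mulVec, sqrtDiag, Units.inv_mk, hdiag, mulVec_diagonal, dotProduct]
  refine Finset.sum_congr rfl fun i _ => ?_
  have hi : 0 < √(n i : ℝ) := Real.sqrt_pos.2 (Nat.cast_pos.2 (hn i))
  field_simp
  rw [Real.sq_sqrt (Nat.cast_nonneg _)]

theorem sum_mul_mMat_pow_mulVec_one_le [NeZero r] {c : ℝ} (hn : ∀ i, 0 < n i)
    (hΛ : Λ.IsSymm) (hnn : ∀ i j, 0 ≤ Λ i j) (hmax : maxEig (mMat n Λ) ≤ c) (ℓ : ℕ) :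
    ∑ i, (n i : ℝ) * (mMat n Λ ^ ℓ *ᵥ 1) i ≤ c ^ ℓ * ∑ i, (n i : ℝ) := by
  rw [sum_mul_mMat_pow_mulVec_one hn]
  refine ((isHermitian_iff_isSymm.2 hΛ).dotProduct_pow_mulVec_le hnn
    (fun t ht => (le_maxEig_mMat hn ht).trans hmax) ℓ _).trans_eq ?_
  simp [dotProduct, Real.mul_self_sqrt]

theorem blowup_pow_mulVec_one (P : Matrix (Fin r) (Fin r) ℝ) (ℓ : ℕ) (a : Vert n) :
    (Matrix.of (fun a b : Vert n => P a.1 b.1) ^ ℓ *ᵥ 1) a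
      = (Matrix.of (fun i j => P i j * n j) ^ ℓ *ᵥ 1) a.1 := by
  induction ℓ generalizing a with
  | zero => simp
  | succ ℓ ih =>
    rw [pow_succ', ← mulVec_mulVec, show _ ^ ℓ *ᵥ 1 = _ from funext ih, pow_succ',
      ← mulVec_mulVec]
    simp only [mulVec, dotProduct, Fintype.sum_sigma, of_apply]
    refine Finset.sum_congr rfl fun j _ => ?_
    simp [mul_assoc, mul_left_comm]

theorem sum_blowup_pow_mulVec_one (P : Matrix (Fin r) (Fin r) ℝ) (ℓ : ℕ) :
    ∑ a : Vert n, (Matrix.of (fun a b : Vert n => P a.1 b.1) ^ ℓ *ᵥ 1) a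
      = ∑ i, (n i : ℝ) * (Matrix.of (fun i j => P i j * n j) ^ ℓ *ᵥ 1) i := by
  simp [blowup_pow_mulVec_one, Fintype.sum_sigma]

theorem pMat_symm (hΛ : Λ.IsSymm) (i j : Fin r) : pMat n Λ i j = pMat n Λ j i := by
  rw [pMat, pMat, hΛ.apply i j, mul_comm]

instance (P : Matrix (Fin r) (Fin r) ℝ) : IsProbabilityMeasure (graphMeasure n P) := by
  unfold graphMeasure
  infer_instance

theorem graphMeasure_forall_mem_eq (p : Fin r → Fin r → ℝ) (S : Finset (Sym2 (Vert n))) :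
    graphMeasure n p {ω | ∀ e ∈ S, ω e = true}
      = ∏ e ∈ S, ((min (p (Quot.out e).1.1 (Quot.out e).2.1).toNNReal 1 : ℝ≥0) : ℝ≥0∞) := by
  classical
  have hset : {ω : Sym2 (Vert n) → Bool | ∀ e ∈ S, ω e = true}
      = Set.univ.pi fun e => if e ∈ S then {true} else Set.univ := by
    ext ω
    simp only [Set.mem_ofPred_eq, Set.mem_univ_pi]
    refine forall_congr' fun e => ?_
    split_ifs with he <;> simp [he]
  rw [hset, graphMeasure, Measure.pi_pi]
  simp_rw [apply_ite, measure_univ, PMF.toMeasure_apply_singleton _ _ (measurableSet_singleton _)]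
  rw [Finset.prod_ite_mem, Finset.univ_inter]
  rfl

-- `Quot.out` orients the pair arbitrarily; the symmetry of `p` makes the orientation irrelevant.
theorem coe_min_toNNReal_out_le {p : Fin r → Fin r → ℝ} (hp : ∀ i j, p i j = p j i)
    (a b : Vert n) :
    ((min (p (Quot.out s(a, b)).1.1 (Quot.out s(a, b)).2.1).toNNReal 1 : ℝ≥0) : ℝ≥0∞)
      ≤ ENNReal.ofReal (p a.1 b.1) := by
  have h := Quot.out_eq s(a, b)
  rcases hq : Quot.out s(a, b) with ⟨x, y⟩
  rw [hq] at h
  rcases Sym2.eq_iff.1 h with ⟨rfl, rfl⟩ | ⟨rfl, rfl⟩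
  · exact ENNReal.coe_le_coe.2 (min_le_left _ _)
  · rw [hp]
    exact ENNReal.coe_le_coe.2 (min_le_left _ _)

theorem lintegral_sum_compSize_le [NeZero r] {ε : ℝ} (hε : 0 < ε) (hn : ∀ i, 0 < n i)
    (hΛ : Λ.IsSymm) (hnn : ∀ i j, 0 ≤ Λ i j) (hmax : maxEig (mMat n Λ) ≤ 1 - ε) :
    ∫⁻ ω, ∑ v, (compSize ω v : ℝ≥0∞) ∂graphMeasure n (pMat n Λ)
      ≤ ENNReal.ofReal ((∑ i, n i : ℝ) / ε) := by
  set B := Matrix.of fun a b : Vert n => pMat n Λ a.1 b.1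
  set K := Fintype.card (Vert n)
  have hB : ∀ a b, 0 ≤ B a b := fun a b => div_nonneg (hnn _ _) (Real.sqrt_nonneg _)
  have hBpow : ∀ ℓ v, 0 ≤ (B ^ ℓ *ᵥ 1) v := fun ℓ v => by
    rw [← sum_pathWeight_ofFn]
    exact Finset.sum_nonneg fun g _ => pathWeight_nonneg hB v _
  have hc : 0 ≤ 1 - ε := (norm_nonneg _).trans <| (isHermitian_iff_isSymm.2 hΛ).norm_toEuclideanCLM_le
    hnn fun t ht => (le_maxEig_mMat hn ht).trans hmax
  have hgeom : ∑ ℓ ∈ Finset.range K, (1 - ε) ^ ℓ ≤ ε⁻¹ := by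
    have := geom_sum_Ico_le_of_lt_one (m := 0) (n := K) hc (by linarith)
    rwa [← Finset.range_eq_Ico, pow_zero, sub_sub_cancel, one_div] at this
  calc ∫⁻ ω, ∑ v, (compSize ω v : ℝ≥0∞) ∂graphMeasure n (pMat n Λ)
      = ∑ v, ∑ u, graphMeasure n (pMat n Λ) {ω | (graphOf ω).Reachable v u} :=
        lintegral_sum_ncard_reachable _ graphOf
    _ ≤ ∑ v, ∑ ℓ ∈ Finset.range K, ENNReal.ofReal ((B ^ ℓ *ᵥ 1) v) :=
        Finset.sum_le_sum fun v _ => sum_measure_reachable_le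
          (fun S => (graphMeasure_forall_mem_eq _ S).le) hB
          (coe_min_toNNReal_out_le (pMat_symm hΛ)) (G := graphOf) (fun _ _ _ h => h.2) v
    _ = ENNReal.ofReal (∑ ℓ ∈ Finset.range K, ∑ v, (B ^ ℓ *ᵥ 1) v) := by
        rw [Finset.sum_comm, ENNReal.ofReal_sum_of_nonneg fun ℓ _ =>
          Finset.sum_nonneg fun v _ => hBpow ℓ v]
        simp_rw [ENNReal.ofReal_sum_of_nonneg fun v _ => hBpow _ v]
    _ ≤ ENNReal.ofReal (∑ ℓ ∈ Finset.range K, (1 - ε) ^ ℓ * ∑ i, (n i : ℝ)) := by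
        gcongr with ℓ
        rw [sum_blowup_pow_mulVec_one]
        exact sum_mul_mMat_pow_mulVec_one_le hn hΛ hnn hmax ℓ
    _ ≤ ENNReal.ofReal ((∑ i, n i : ℝ) / ε) := by
        rw [← Finset.sum_mul, div_eq_inv_mul]
        gcongr

/-- in the sub-critical case `ρ(M) ≤ 1 - ε`, with probability at least
`1 - η` every connected component has at most `η·n` vertices. -/
theorem subcritical_small_components (r A : ℕ) (ε η : ℝ) (hε : 0 < ε) (hη : 0 < η) :
    ∃ N : ℕ, ∀ (n : Fin r → ℕ) (Λ : Matrix (Fin r) (Fin r) ℝ),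
      (∀ i, 0 < n i) → Λ.IsSymm → (∀ i j, 0 ≤ Λ i j) →
      (∀ i j, pMat n Λ i j ≤ 1) →
      N ≤ ∑ i, n i → Balanced A n → ConnectedTypes Λ → Separated ε Λ →
      maxEig (mMat n Λ) ≤ 1 - ε →
      ENNReal.ofReal (1 - η) ≤
        graphMeasure n (pMat n Λ)
          {ω | ∀ v : Vert n, (compSize ω v : ℝ) ≤ η * ((∑ i, n i : ℕ) : ℝ)} := by
  refine ⟨⌈(ε * η ^ 3)⁻¹⌉₊, fun n Λ hn hΛ hnn _ hN _ _ _ hmax => ?_⟩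
  set m : ℝ := ((∑ i, n i : ℕ) : ℝ)
  have hm : (ε * η ^ 3)⁻¹ ≤ m := Nat.ceil_le.1 hN
  have hm0 : 0 < m := lt_of_lt_of_le (by positivity) hm
  have : NeZero r := ⟨by rintro rfl; simp [m] at hm0⟩
  have hlarge : m / ε ≤ (η * m) ^ 2 * η := by
    rw [inv_le_iff_one_le_mul₀ (by positivity)] at hm
    rw [div_le_iff₀ hε]
    nlinarith
  have hmarkov : ENNReal.ofReal ((η * m) ^ 2) *
        graphMeasure n (pMat n Λ) {ω | ∃ v, η * m < compSize ω v}
      ≤ ENNReal.ofReal ((η * m) ^ 2) * ENNReal.ofReal η := by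
    refine (mul_measure_exists_lt_ncard_reachable_le _ graphOf (by positivity)).trans ?_
    refine (lintegral_sum_compSize_le hε hn hΛ hnn hmax).trans ?_
    rw [← ENNReal.ofReal_mul (by positivity), ← Nat.cast_sum]
    exact ENNReal.ofReal_le_ofReal hlarge
  have hbad : graphMeasure n (pMat n Λ) {ω | ∃ v, η * m < compSize ω v} ≤ ENNReal.ofReal η :=
    (ENNReal.mul_le_mul_iff_right (ENNReal.ofReal_pos.2 (by positivity)).ne'
      ENNReal.ofReal_ne_top).1 hmarkov
  have hgood : {ω | ∀ v : Vert n, (compSize ω v : ℝ) ≤ η * m}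
      = {ω | ∃ v, η * m < compSize ω v}ᶜ := by
    ext ω
    simp only [Set.mem_ofPred_eq, Set.mem_compl_iff, not_exists, not_lt]
  rw [hgood, prob_compl_eq_one_sub MeasurableSet.of_discrete, ENNReal.ofReal_sub _ hη.le,
    ENNReal.ofReal_one]
  exact tsub_le_tsub_left hbad 1

end Pandemic
end

section
/- Let Λ be an r×r symmetric matrix with nonnegative entries that is connected and ε-separated (with 0 < ε ≤ 1). Then there exists a unit ℓ²-norm eigenvector y_1 of Λ with eigenvalue equal to the largest eigenvalue ρ(Λ), all of whose entries are nonnegative and satisfy y_1(j) ≥ ε^{2r}/(√r · r^r) for every j ∈ [r]. -/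
open MeasureTheory Matrix

/-!
Maximising the Rayleigh quotient `x ↦ ⟪Λ x, x⟫` over the unit sphere gives a unit eigenvector
for the largest eigenvalue `μ`, and since `Λ ≥ 0` the maximiser can be replaced by its entrywise
absolute value. For this nonnegative eigenvector `y`, the largest entry is at least `1/√r`, and
comparing the eigen-equation at that entry with the row sums gives `μ ≤ r/ε`. Along an edge
`a ~ b` of the type graph, `ε y a ≤ Λ b a * y a ≤ μ y b`, so `y b ≥ (ε²/r) y a`; a path of length
`< r` from the largest entry to `j` gives the bound.
-/

section

variable {E : Type*} [NormedAddCommGroup E] [InnerProductSpace ℝ E]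

theorem ContinuousLinearMap.rayleighQuotient_eq_of_apply_eq_smul (T : E →L[ℝ] E) {x : E} {t : ℝ}
    (hx : x ≠ 0) (hTx : T x = t • x) : T.rayleighQuotient x = t := by
  have : ‖x‖ ≠ 0 := norm_ne_zero_iff.mpr hx
  rw [ContinuousLinearMap.rayleighQuotient, ContinuousLinearMap.reApplyInnerSelf_apply, hTx,
    real_inner_smul_left, real_inner_self_eq_norm_sq]
  simp only [RCLike.re_to_real]
  field_simp

theorem ContinuousLinearMap.le_iSup_rayleighQuotient (T : E →L[ℝ] E) {x : E} {t : ℝ}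
    (hx : x ≠ 0) (hTx : T x = t • x) : t ≤ ⨆ x : {x : E // x ≠ 0}, T.rayleighQuotient x := by
  have hbdd : BddAbove (Set.range fun x : {x : E // x ≠ 0} ↦ T.rayleighQuotient x) :=
    ⟨‖T‖, Set.forall_mem_range.2 fun x ↦ (le_abs_self _).trans (T.rayleighQuotient_le_norm x)⟩
  exact T.rayleighQuotient_eq_of_apply_eq_smul hx hTx ▸ le_ciSup hbdd ⟨x, hx⟩

end

section

variable {ι : Type*} [Fintype ι]

open Module End

theorem Matrix.dotProduct_mulVec_le_abs {A : Matrix ι ι ℝ} (hA : ∀ i j, 0 ≤ A i j) (x : ι → ℝ) :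
    x ⬝ᵥ A *ᵥ x ≤ |x| ⬝ᵥ A *ᵥ |x| := by
  simp only [dotProduct, mulVec, Finset.mul_sum, Pi.abs_apply]
  refine Finset.sum_le_sum fun i _ ↦ Finset.sum_le_sum fun j _ ↦ ?_
  calc x i * (A i j * x j) ≤ |x i * (A i j * x j)| := le_abs_self _
    _ = |x i| * (A i j * |x j|) := by rw [abs_mul, abs_mul, abs_of_nonneg (hA i j)]

theorem Matrix.mul_apply_le_of_mulVec_eq_smul {A : Matrix ι ι ℝ} (hA : ∀ i j, 0 ≤ A i j)
    {y : ι → ℝ} (hy : 0 ≤ y) {μ : ℝ} (h : A *ᵥ y = μ • y) (a b : ι) : A b a * y a ≤ μ * y b := by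
  calc A b a * y a ≤ ∑ k, A b k * y k :=
        Finset.single_le_sum (fun k _ ↦ mul_nonneg (hA b k) (hy k)) (Finset.mem_univ a)
    _ = μ * y b := by rw [← smul_eq_mul, ← Pi.smul_apply, ← h]; rfl

theorem Matrix.le_card_mul_of_mulVec_eq_smul {A : Matrix ι ι ℝ} {c : ℝ} (hc : 0 ≤ c)
    (hA : ∀ i j, A i j ≤ c)
    {y : ι → ℝ} (hy : 0 ≤ y) (hy0 : y ≠ 0) {μ : ℝ} (h : A *ᵥ y = μ • y) :
    μ ≤ Fintype.card ι * c := by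
  obtain ⟨i, hi⟩ := Function.ne_iff.mp hy0
  have : Nonempty ι := ⟨i⟩
  obtain ⟨i₀, hi₀⟩ := Finite.exists_max y
  have hpos : 0 < y i₀ := ((hy i).lt_of_ne' hi).trans_le (hi₀ i)
  refine le_of_mul_le_mul_right ?_ hpos
  calc μ * y i₀ = ∑ k, A i₀ k * y k := by rw [← smul_eq_mul, ← Pi.smul_apply, ← h]; rfl
    _ ≤ ∑ _k : ι, c * y i₀ := by gcongr with k; exacts [hy k, hA i₀ k, hi₀ k]
    _ = Fintype.card ι * c * y i₀ := by simp [mul_assoc]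

theorem exists_inv_sqrt_card_le {y : ι → ℝ} (hy : 0 ≤ y) (h : ∑ i, y i ^ 2 = 1) :
    ∃ i, (√(Fintype.card ι))⁻¹ ≤ y i := by
  have : Nonempty ι := by
    by_contra hι
    simp [not_nonempty_iff.mp hι] at h
  obtain ⟨i₀, hi₀⟩ := Finite.exists_max y
  have hcard : 1 ≤ Fintype.card ι * y i₀ ^ 2 := by
    calc (1 : ℝ) = ∑ i, y i ^ 2 := h.symm
      _ ≤ ∑ _i : ι, y i₀ ^ 2 := by gcongr with i; exacts [hy i, hi₀ i]
      _ = Fintype.card ι * y i₀ ^ 2 := by simp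
  refine ⟨i₀, ?_⟩
  rw [← Real.sqrt_inv, Real.sqrt_le_left (hy i₀)]
  have : 0 < (Fintype.card ι : ℝ) := by exact_mod_cast Fintype.card_pos
  exact (inv_le_iff_one_le_mul₀' this).mpr hcard

theorem Matrix.IsSymm.exists_nonneg_eigenvector_isGreatest [DecidableEq ι] [Nonempty ι]
    {A : Matrix ι ι ℝ} (hA : A.IsSymm) (hA0 : ∀ i j, 0 ≤ A i j) :
    ∃ μ : ℝ, ∃ y : ι → ℝ, IsGreatest {t | HasEigenvalue (toLin' A) t} μ ∧
      ∑ i, y i ^ 2 = 1 ∧ 0 ≤ y ∧ A *ᵥ y = μ • y := by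
  set T := toEuclideanCLM (𝕜 := ℝ) A
  have hT : IsSelfAdjoint T := by
    rw [ContinuousLinearMap.isSelfAdjoint_iff_isSymmetric]
    exact isSymmetric_toEuclideanLin_iff.mpr (isHermitian_iff_isSymm.mpr hA)
  have hquad (x : EuclideanSpace ℝ ι) : T.reApplyInnerSelf x = x.ofLp ⬝ᵥ A *ᵥ x.ofLp := by
    rw [ContinuousLinearMap.reApplyInnerSelf_apply, real_inner_comm]
    exact inner_toEuclideanCLM A x x
  obtain ⟨x₀, hx₀, hmax⟩ := (isCompact_sphere (0 : EuclideanSpace ℝ ι) 1).exists_isMaxOn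
    (NormedSpace.sphere_nonempty.mpr zero_le_one) T.reApplyInnerSelf_continuous.continuousOn
  set y : EuclideanSpace ℝ ι := WithLp.toLp 2 |x₀.ofLp|
  have hy : ‖y‖ = 1 := by
    rw [← mem_sphere_zero_iff_norm.mp hx₀]
    simp [y, EuclideanSpace.norm_eq]
  have hy0 : y ≠ 0 := norm_ne_zero_iff.mp (by simp [hy])
  have hymax : IsMaxOn T.reApplyInnerSelf (Metric.sphere 0 ‖y‖) y := by
    rw [hy]
    intro z hz
    exact (hmax hz).trans (by simpa only [hquad] using dotProduct_mulVec_le_abs hA0 x₀.ofLp)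
  set μ := ⨆ x : {x : EuclideanSpace ℝ ι // x ≠ 0}, T.rayleighQuotient x
  have hyμ : A *ᵥ y.ofLp = μ • y.ofLp :=
    congrArg WithLp.ofLp (hT.hasEigenvector_of_isMaxOn hy0 hymax).apply_eq_smul
  refine ⟨μ, y.ofLp, ⟨?_, ?_⟩, ?_, abs_nonneg _, hyμ⟩
  · refine hasEigenvalue_of_hasEigenvector (x := y.ofLp) ⟨mem_eigenspace_iff.mpr ?_, ?_⟩
    · rwa [toLin'_apply]
    · simpa using hy0
  · rintro t ht
    obtain ⟨v, hv⟩ := ht.exists_hasEigenvector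
    refine T.le_iSup_rayleighQuotient (x := WithLp.toLp 2 v) (by simpa using hv.2) ?_
    simp [T, ← toLin'_apply, hv.apply_eq_smul]
  · rw [← EuclideanSpace.real_norm_sq_eq, hy, one_pow]

end

theorem SimpleGraph.Walk.pow_length_mul_le {V : Type*} {G : SimpleGraph V} {f : V → ℝ} {c : ℝ}
    (hc : 0 ≤ c) (h : ∀ a b, G.Adj a b → c * f a ≤ f b) {a b : V} (w : G.Walk a b) :
    c ^ w.length * f a ≤ f b := by
  induction w with
  | nil => simp
  | cons hab w ih =>
    rw [length_cons, pow_succ, mul_assoc]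
    exact (mul_le_mul_of_nonneg_left (h _ _ hab) (pow_nonneg hc _)).trans ih

theorem SimpleGraph.Connected.pow_card_mul_le {V : Type*} [Fintype V] {G : SimpleGraph V}
    (hG : G.Connected) {f : V → ℝ} {c : ℝ} (hc0 : 0 ≤ c) (hc1 : c ≤ 1)
    (h : ∀ a b, G.Adj a b → c * f a ≤ f b) {a : V} (ha : 0 ≤ f a) (b : V) :
    c ^ Fintype.card V * f a ≤ f b := by
  obtain ⟨p, hp⟩ := (hG a b).exists_isPath
  calc c ^ Fintype.card V * f a ≤ c ^ p.length * f a := by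
        gcongr ?_ * _
        exact pow_le_pow_of_le_one hc0 hc1 hp.length_lt.le
    _ ≤ f b := p.pow_length_mul_le hc0 h

namespace Pandemic

variable {r : ℕ} {ε : ℝ} {Λ : Matrix (Fin r) (Fin r) ℝ}

theorem Separated.apply_le (hsep : Separated ε Λ) (hε : 0 ≤ ε) (i j : Fin r) : Λ i j ≤ 1 / ε :=
  (hsep i j).elim (fun h ↦ h ▸ by positivity) And.right

theorem Separated.le_apply_of_adj (hsep : Separated ε Λ) (hsymm : Λ.IsSymm) {a b : Fin r}
    (hab : (typeGraph Λ).Adj a b) : ε ≤ Λ b a := by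
  have hpos : 0 < Λ b a := hab.2.elim (fun h ↦ hsymm.apply a b ▸ h) id
  exact ((hsep b a).resolve_left hpos.ne').1

theorem pow_div_le_of_mulVec_eq_smul (hε : 0 < ε) (hε1 : ε ≤ 1) (hsymm : Λ.IsSymm)
    (hnonneg : ∀ i j, 0 ≤ Λ i j) (hconn : ConnectedTypes Λ) (hsep : Separated ε Λ)
    {μ : ℝ} {y : Fin r → ℝ} (hy : 0 ≤ y) (hy1 : ∑ i, y i ^ 2 = 1) (h : Λ *ᵥ y = μ • y)
    (j : Fin r) : ε ^ (2 * r) / (√r * (r : ℝ) ^ r) ≤ y j := by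
  have : Nonempty (Fin r) := hconn.nonempty
  have hr : (1 : ℝ) ≤ r := by exact_mod_cast Fin.pos'
  have hμ : μ ≤ r / ε := by
    have hy0 : y ≠ 0 := by rintro rfl; simp at hy1
    simpa [div_eq_mul_inv] using
      le_card_mul_of_mulVec_eq_smul (by positivity) (hsep.apply_le hε.le) hy hy0 h
  have hstep (a b : Fin r) (hab : (typeGraph Λ).Adj a b) : ε ^ 2 / r * y a ≤ y b := by
    have : ε * y a ≤ r / ε * y b := calc
      ε * y a ≤ Λ b a * y a := by gcongr; exacts [hy a, hsep.le_apply_of_adj hsymm hab]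
      _ ≤ μ * y b := mul_apply_le_of_mulVec_eq_smul hnonneg hy h a b
      _ ≤ r / ε * y b := by gcongr; exact hy b
    calc ε ^ 2 / r * y a = ε / r * (ε * y a) := by ring
      _ ≤ ε / r * (r / ε * y b) := by gcongr
      _ = y b := by field_simp
  obtain ⟨i₀, hi₀⟩ := exists_inv_sqrt_card_le hy hy1
  rw [Fintype.card_fin] at hi₀
  have hbase : ε ^ 2 / r ≤ 1 := div_le_one_of_le₀ ((pow_le_one₀ hε.le hε1).trans hr) (by positivity)
  calc ε ^ (2 * r) / (√r * r ^ r) = (ε ^ 2 / r) ^ r * (√r)⁻¹ := by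
        rw [pow_mul, div_pow]; field_simp
    _ ≤ (ε ^ 2 / r) ^ r * y i₀ := by gcongr
    _ ≤ y j := by
        simpa using hconn.pow_card_mul_le (by positivity) hbase hstep (hy i₀) j

/-- a connected `ε`-separated symmetric nonnegative matrix has a unit
eigenvector for its largest eigenvalue whose entries are all nonnegative and at least
`ε^{2r}/(√r · r^r)`. -/
theorem perron_vector_lower_bound (r : ℕ) (ε : ℝ) (hε : 0 < ε) (hε1 : ε ≤ 1)
    (Λ : Matrix (Fin r) (Fin r) ℝ) (hsymm : Λ.IsSymm)
    (hnonneg : ∀ i j, 0 ≤ Λ i j) (hconn : ConnectedTypes Λ) (hsep : Separated ε Λ) :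
    ∃ y : Fin r → ℝ, euclNorm y = 1 ∧ Λ.mulVec y = maxEig Λ • y ∧
      ∀ j, 0 ≤ y j ∧ ε ^ (2 * r) / (Real.sqrt r * (r : ℝ) ^ r) ≤ y j := by
  have : Nonempty (Fin r) := hconn.nonempty
  obtain ⟨μ, y, hμ, hy1, hy, hyμ⟩ := hsymm.exists_nonneg_eigenvector_isGreatest hnonneg
  refine ⟨y, by rw [euclNorm, hy1, Real.sqrt_one], by rwa [maxEig, hμ.csSup_eq], fun j ↦ ⟨hy j, ?_⟩⟩
  exact pow_div_le_of_mulVec_eq_smul hε hε1 hsymm hnonneg hconn hsep hy hy1 hyμ j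

end Pandemic
end

section
/- Let A ∈ ℕ and suppose (n_1,…,n_r) is A-balanced. Let y_1,…,y_r be an orthonormal eigenbasis of the symmetric matrix Λ, let x_j = D^{−1/2} y_j, and for a vector z ∈ [0,∞)^r write z = Σ_j α_j x_j with α_j = ⟨D^{1/2} z, y_j⟩. Then for every j ∈ [r], ‖α_j x_j‖₂ ≤ √A · ‖z‖₂. -/
open MeasureTheory Matrix

namespace Pandemic

variable {r : ℕ}

/-! By Cauchy–Schwarz and `‖y_j‖ = 1`, `α_j² ≤ ∑ i, n_i z_i²`, while `‖x_j‖² = ∑ k, y_jk² / n_k`.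
Expanding the product and bounding each ratio `n_i / n_k` by `A` leaves `A ‖z‖² ‖y_j‖² = A ‖z‖²`. -/

section

variable {ι : Type*} [Fintype ι]

theorem dotProduct_sqrt_mul_sq_le {c : ι → ℝ} (hc : ∀ i, 0 ≤ c i) (a b : ι → ℝ) :
    ((fun i => √(c i) * a i) ⬝ᵥ b) ^ 2 ≤ (∑ i, c i * a i ^ 2) * ∑ i, b i ^ 2 := by
  have hsq : ∀ i, (√(c i) * a i) ^ 2 = c i * a i ^ 2 := fun i => by
    rw [mul_pow, Real.sq_sqrt (hc i)]
  simpa only [dotProduct, hsq] using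
    Finset.sum_mul_sq_le_sq_mul_sq Finset.univ (fun i => √(c i) * a i) b

theorem sum_sq_smul_inv_sqrt_mul {c : ι → ℝ} (hc : ∀ i, 0 ≤ c i) (α : ℝ) (b : ι → ℝ) :
    ∑ k, ((α • fun k => (√(c k))⁻¹ * b k) k) ^ 2 = α ^ 2 * ∑ k, b k ^ 2 / c k := by
  rw [Finset.mul_sum]
  refine Finset.sum_congr rfl fun k _ => ?_
  rw [Pi.smul_apply, smul_eq_mul, mul_pow, mul_pow, inv_pow, Real.sq_sqrt (hc k)]
  ring

theorem sum_mul_sq_mul_sum_sq_div_le {A : ℝ} {c : ι → ℝ} (hc : ∀ i k, c i / c k ≤ A)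
    (a b : ι → ℝ) :
    (∑ i, c i * a i ^ 2) * ∑ k, b k ^ 2 / c k ≤ A * ((∑ i, a i ^ 2) * ∑ k, b k ^ 2) := by
  rw [Finset.sum_mul_sum, Finset.sum_mul_sum, Finset.mul_sum]
  refine Finset.sum_le_sum fun i _ => ?_
  rw [Finset.mul_sum]
  refine Finset.sum_le_sum fun k _ => ?_
  calc c i * a i ^ 2 * (b k ^ 2 / c k) = c i / c k * (a i ^ 2 * b k ^ 2) := by ring
    _ ≤ A * (a i ^ 2 * b k ^ 2) := by gcongr; exact hc i k

end

-- With `x / 0 = 0` the bound also holds when `n k = 0`, since `0 ≤ A`.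
theorem Balanced.cast_div_le {A : ℕ} {n : Fin r → ℕ} (h : Balanced A n) (i k : Fin r) :
    (n i : ℝ) / n k ≤ A := by
  rcases (n k).eq_zero_or_pos with hk | hk
  · simp [hk]
  · rw [div_le_iff₀ (by exact_mod_cast hk)]
    exact_mod_cast h i k

theorem euclNorm_le_sqrt_mul {A : ℝ} (hA : 0 ≤ A) {v z : Fin r → ℝ}
    (h : ∑ k, v k ^ 2 ≤ A * ∑ k, z k ^ 2) : euclNorm v ≤ √A * euclNorm z := by
  rw [euclNorm, euclNorm, ← Real.sqrt_mul hA]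
  exact Real.sqrt_le_sqrt h

theorem eigen_component_upper_bound_general (A r : ℕ) (n : Fin r → ℕ)
    (hbal : Balanced A n)
    (y : Fin r → (Fin r → ℝ))
    (hortho : ∀ i j, y i ⬝ᵥ y j = if i = j then 1 else 0)
    (z : Fin r → ℝ) :
    ∀ j, euclNorm (((fun l => Real.sqrt (n l) * z l) ⬝ᵥ y j) •
        fun k => (Real.sqrt (n k))⁻¹ * y j k) ≤ Real.sqrt A * euclNorm z := by
  intro j
  have hunit : ∑ k, y j k ^ 2 = 1 := by simpa [dotProduct, sq] using hortho j j
  have hn : ∀ k, (0 : ℝ) ≤ n k := fun k => Nat.cast_nonneg _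
  refine euclNorm_le_sqrt_mul (Nat.cast_nonneg A) ?_
  rw [sum_sq_smul_inv_sqrt_mul hn]
  calc _ ≤ (∑ i, (n i : ℝ) * z i ^ 2) * ∑ k, y j k ^ 2 / n k := by
        gcongr
        simpa only [hunit, mul_one] using dotProduct_sqrt_mul_sq_le hn z (y j)
    _ ≤ A * ((∑ i, z i ^ 2) * ∑ k, y j k ^ 2) :=
        sum_mul_sq_mul_sum_sq_div_le hbal.cast_div_le _ _
    _ = A * ∑ i, z i ^ 2 := by rw [hunit, mul_one]

/-- writing a nonnegative vector `z = Σ_j α_j x_j` in the eigenbasis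
`x_j = D^{-1/2} y_j`, each component satisfies `‖α_j x_j‖₂ ≤ √A · ‖z‖₂`. -/
theorem eigen_component_upper_bound (A r : ℕ) (n : Fin r → ℕ) (hn : ∀ i, 0 < n i)
    (hbal : Balanced A n) (Λ : Matrix (Fin r) (Fin r) ℝ) (hsymm : Λ.IsSymm)
    (hnonneg : ∀ i j, 0 ≤ Λ i j)
    (y : Fin r → (Fin r → ℝ)) (θ : Fin r → ℝ)
    (hortho : ∀ i j, y i ⬝ᵥ y j = if i = j then 1 else 0)
    (heig : ∀ i, Λ.mulVec (y i) = θ i • y i)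
    (z : Fin r → ℝ) (hz : ∀ i, 0 ≤ z i) :
    ∀ j, euclNorm (((fun l => Real.sqrt (n l) * z l) ⬝ᵥ y j) •
        fun k => (Real.sqrt (n k))⁻¹ * y j k) ≤ Real.sqrt A * euclNorm z :=
  eigen_component_upper_bound_general A r n hbal y hortho z

end Pandemic
end

section
/- For all A, r ∈ ℕ and ε > 0 there exists k ∈ ℕ such that the following holds. Suppose (n_1,…,n_r) is A-balanced, Λ is connected and ε-separated, and ρ(M) ≥ 1 + ε. Then for every vector z ∈ ℝ^r with nonnegative entries, ‖M^k z‖₂ ≥ 2‖z‖₂. -/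
open MeasureTheory Matrix

namespace Pandemic

variable {r : ℕ}

/-!
Conjugating by `D = diag (√n i)` turns `M` into the symmetric matrix `Λ`, so an eigenvalue
`t ≥ 1 + ε / 2` of `M` yields an eigenvector `y` of `Λ`, and `Λ |y| ≥ t |y|` entrywise. Smoothing
by `(1 + Λ) ^ (r - 1)` gives a vector `v` with `Λ v ≥ t v` whose entries agree up to a factor
depending only on `r` and `ε` (connectivity and separation). Pairing `Λ ^ k w` with `v` and using
symmetry, the ℓ¹-mass of `Λ ^ k w` is at least `t ^ k` times that factor times the mass of `w ≥ 0`;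
Cauchy–Schwarz and `A`-balance turn this into ℓ² growth of `M ^ k z` up to a loss depending only
on `r` and `A`.
-/

section NonnegMatrix

variable {ι : Type*} [Fintype ι] {X : Matrix ι ι ℝ}

lemma mulVec_mono (hX : ∀ i j, 0 ≤ X i j) {u v : ι → ℝ} (h : u ≤ v) : X *ᵥ u ≤ X *ᵥ v :=
  fun i => Finset.sum_le_sum fun j _ => mul_le_mul_of_nonneg_left (h j) (hX i j)

lemma mulVec_nonneg (hX : ∀ i j, 0 ≤ X i j) {v : ι → ℝ} (hv : 0 ≤ v) : 0 ≤ X *ᵥ v := by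
  simpa using mulVec_mono hX hv

lemma pow_smul_le_pow_mulVec [DecidableEq ι] (hX : ∀ i j, 0 ≤ X i j) {t : ℝ} (ht : 0 ≤ t)
    {v : ι → ℝ} (hv : t • v ≤ X *ᵥ v) (k : ℕ) : t ^ k • v ≤ (X ^ k) *ᵥ v := by
  induction k with
  | zero => simp
  | succ k ih =>
    calc t ^ (k + 1) • v = t • t ^ k • v := by rw [pow_succ', mul_smul]
      _ ≤ t • (X ^ k) *ᵥ v := smul_le_smul_of_nonneg_left ih ht
      _ = (X ^ k) *ᵥ (t • v) := (mulVec_smul _ _ _).symm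
      _ ≤ (X ^ k) *ᵥ (X *ᵥ v) := mulVec_mono (pow_apply_nonneg hX k) hv
      _ = (X ^ (k + 1)) *ᵥ v := by rw [mulVec_mulVec, pow_succ]

lemma smul_abs_le_mulVec_abs (hX : ∀ i j, 0 ≤ X i j) {t : ℝ} (ht : 0 ≤ t) {y : ι → ℝ}
    (hy : X *ᵥ y = t • y) : t • |y| ≤ X *ᵥ |y| := fun i =>
  calc (t • |y|) i = |(X *ᵥ y) i| := by simp [hy, abs_mul, abs_of_nonneg ht]
    _ ≤ ∑ j, |X i j * y j| := Finset.abs_sum_le_sum_abs _ _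
    _ = (X *ᵥ |y|) i := by simp [mulVec, dotProduct, abs_mul, abs_of_nonneg (hX i _)]

lemma mul_sum_le_mulVec_apply {lo : ℝ} {a : ι → ℝ} (ha : 0 ≤ a) {i : ι}
    (h : ∀ j, lo ≤ X i j) : lo * ∑ j, a j ≤ (X *ᵥ a) i := by
  rw [Finset.mul_sum]
  exact Finset.sum_le_sum fun j _ => mul_le_mul_of_nonneg_right (h j) (ha j)

lemma mulVec_apply_le_mul_sum {hi : ℝ} {a : ι → ℝ} (ha : 0 ≤ a) {i : ι}
    (h : ∀ j, X i j ≤ hi) : (X *ᵥ a) i ≤ hi * ∑ j, a j := by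
  rw [Finset.mul_sum]
  exact Finset.sum_le_sum fun j _ => mul_le_mul_of_nonneg_right (h j) (ha j)

lemma pow_apply_le [DecidableEq ι] (hX₀ : ∀ i j, 0 ≤ X i j) {β : ℝ} (hX : ∀ i j, X i j ≤ β)
    (m : ℕ) (i j : ι) : (X ^ m) i j ≤ (Fintype.card ι * β) ^ m := by
  induction m generalizing j with
  | zero => by_cases h : i = j <;> simp [one_apply, h]
  | succ m ih =>
    have hβ : 0 ≤ β := (hX₀ i j).trans (hX i j)
    calc (X ^ (m + 1)) i j = ∑ l, (X ^ m) i l * X l j := by rw [pow_succ, mul_apply]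
      _ ≤ ∑ _l : ι, (Fintype.card ι * β) ^ m * β := Finset.sum_le_sum fun l _ =>
          mul_le_mul (ih l) (hX l j) (hX₀ l j) (by positivity)
      _ = (Fintype.card ι * β) ^ (m + 1) := by simp [pow_succ]; ring

lemma pow_apply_ge_of_walk [DecidableEq ι] {G : SimpleGraph ι} {c : ℝ} (hc : 0 ≤ c)
    (hX₀ : ∀ i j, 0 ≤ X i j) (hdiag : ∀ i, c ≤ X i i) (hadj : ∀ i j, G.Adj i j → c ≤ X i j)
    {m : ℕ} {i j : ι} (p : G.Walk i j) (hp : p.length ≤ m) : c ^ m ≤ (X ^ m) i j := by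
  induction m generalizing i with
  | zero =>
    obtain rfl := p.eq_of_length_eq_zero (Nat.le_zero.mp hp)
    simp
  | succ m ih =>
    obtain ⟨l, hcl, hl⟩ : ∃ l, c ≤ X i l ∧ c ^ m ≤ (X ^ m) l j := by
      cases p with
      | nil => exact ⟨_, hdiag _, ih .nil (Nat.zero_le m)⟩
      | cons h q => exact ⟨_, hadj _ _ h, ih q (by simpa using hp)⟩
    calc c ^ (m + 1) ≤ X i l * (X ^ m) l j := by
          rw [pow_succ']; exact mul_le_mul hcl hl (by positivity) (hX₀ i l)
      _ ≤ ∑ l', X i l' * (X ^ m) l' j := Finset.single_le_sum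
          (fun l' _ => mul_nonneg (hX₀ i l') (pow_apply_nonneg hX₀ m l' j)) (Finset.mem_univ l)
      _ = (X ^ (m + 1)) i j := by rw [pow_succ', mul_apply]

lemma pow_card_sub_one_apply_ge [DecidableEq ι] {G : SimpleGraph ι} (hG : G.Connected) {c : ℝ}
    (hc : 0 ≤ c) (hX₀ : ∀ i j, 0 ≤ X i j) (hdiag : ∀ i, c ≤ X i i)
    (hadj : ∀ i j, G.Adj i j → c ≤ X i j) (i j : ι) : c ^ (Fintype.card ι - 1) ≤ (X ^ (Fintype.card ι - 1)) i j := by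
  obtain ⟨p⟩ := hG.preconnected i j
  have := p.toPath.2.length_lt
  exact pow_apply_ge_of_walk hc hX₀ hdiag hadj p.toPath.1 (by omega)

lemma mul_sum_le_mul_sum_mulVec (hX : X.IsSymm) {t lo hi : ℝ} (ht : 0 ≤ t) {v w : ι → ℝ}
    (hv : t • v ≤ X *ᵥ v) (hlo : ∀ i, lo ≤ v i) (hhi : ∀ i, v i ≤ hi) (hw : 0 ≤ w)
    (hXw : 0 ≤ X *ᵥ w) : t * lo * ∑ i, w i ≤ hi * ∑ i, (X *ᵥ w) i :=
  calc t * lo * ∑ i, w i ≤ ∑ i, (t • v) i * w i := by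
        rw [Finset.mul_sum]
        exact Finset.sum_le_sum fun i _ =>
          mul_le_mul_of_nonneg_right (by simpa using mul_le_mul_of_nonneg_left (hlo i) ht) (hw i)
    _ ≤ ∑ i, (X *ᵥ v) i * w i :=
        Finset.sum_le_sum fun i _ => mul_le_mul_of_nonneg_right (hv i) (hw i)
    _ = ∑ i, v i * (X *ᵥ w) i := by
        have : (X *ᵥ v) ⬝ᵥ w = v ⬝ᵥ (X *ᵥ w) := by
          rw [dotProduct_mulVec, ← mulVec_transpose, hX.eq]
        simpa [dotProduct] using this
    _ ≤ hi * ∑ i, (X *ᵥ w) i := by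
        rw [Finset.mul_sum]
        exact Finset.sum_le_sum fun i _ => mul_le_mul_of_nonneg_right (hhi i) (hXw i)

end NonnegMatrix

section TypeMatrix

variable {Λ : Matrix (Fin r) (Fin r) ℝ} {ε : ℝ}

lemma one_add_apply_nonneg (hΛ₀ : ∀ i j, 0 ≤ Λ i j) (i j : Fin r) : 0 ≤ (1 + Λ) i j :=
  add_nonneg (by by_cases h : i = j <;> simp [one_apply, h]) (hΛ₀ i j)

lemma one_add_apply_le (hε : 0 < ε) (hsep : Separated ε Λ) (i j : Fin r) :
    (1 + Λ) i j ≤ 1 + 1 / ε := by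
  have h1 : (1 : Matrix (Fin r) (Fin r) ℝ) i j ≤ 1 := by
    by_cases h : i = j <;> simp [one_apply, h]
  have h2 : Λ i j ≤ 1 / ε := by
    rcases hsep i j with h | h
    · rw [h]; positivity
    · exact h.2
  exact add_le_add h1 h2

lemma min_le_one_add_apply_self (hΛ₀ : ∀ i j, 0 ≤ Λ i j) (i : Fin r) :
    min ε 1 ≤ (1 + Λ) i i := by
  simpa using (min_le_right ε 1).trans (le_add_of_nonneg_right (hΛ₀ i i))

lemma min_le_one_add_apply_of_adj (hsym : Λ.IsSymm) (hsep : Separated ε Λ) {i j : Fin r}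
    (h : (typeGraph Λ).Adj i j) : min ε 1 ≤ (1 + Λ) i j := by
  obtain ⟨hne, hpos⟩ := h
  have hpos : 0 < Λ i j := hpos.elim id fun h => by rwa [hsym.apply i j] at h
  have hε : ε ≤ Λ i j := (hsep i j).resolve_left hpos.ne' |>.1
  simpa [one_apply_ne hne] using (min_le_left ε 1).trans hε

/-- A lower bound for the ratio of the smallest to the largest entry of `(1 + Λ) ^ (r - 1) *ᵥ a`
for nonnegative `a ≠ 0`, when `Λ` is connected and `ε`-separated. -/
noncomputable def harnackConst (r : ℕ) (ε : ℝ) : ℝ :=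
  (min ε 1 / (r * (1 + 1 / ε))) ^ (r - 1)

lemma harnackConst_pos (hε : 0 < ε) : 0 < harnackConst r ε := by
  rcases r with _ | r
  · simp [harnackConst]
  · unfold harnackConst; positivity

/-- The positive vector `v = (1 + Λ) ^ (r - 1) *ᵥ |y|` built from an eigenvector `y` satisfies
`t • v ≤ Λ *ᵥ v`; pairing `Λ ^ k *ᵥ w` against it transfers the growth `t ^ k` to every `w ≥ 0`. -/
theorem pow_mul_harnackConst_mul_sum_le (hΛ₀ : ∀ i j, 0 ≤ Λ i j) (hsym : Λ.IsSymm)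
    (hconn : ConnectedTypes Λ) (hε : 0 < ε) (hsep : Separated ε Λ) {t : ℝ} (ht : 0 ≤ t)
    {y : Fin r → ℝ} (hy₀ : y ≠ 0) (hy : Λ *ᵥ y = t • y) (k : ℕ) {w : Fin r → ℝ} (hw : 0 ≤ w) :
    t ^ k * harnackConst r ε * ∑ i, w i ≤ ∑ i, (Λ ^ k *ᵥ w) i := by
  set T := (1 + Λ) ^ (r - 1)
  set δ := min ε 1 ^ (r - 1)
  set C := ((r : ℝ) * (1 + 1 / ε)) ^ (r - 1)
  obtain ⟨i₀, hi₀⟩ := Function.ne_iff.mp hy₀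
  have ha : 0 ≤ |y| := abs_nonneg y
  set S := ∑ i, |y| i
  set W := ∑ i, w i
  set U := ∑ i, (Λ ^ k *ᵥ w) i
  have hS : 0 < S :=
    Finset.sum_pos' (fun i _ => ha i) ⟨i₀, Finset.mem_univ _, abs_pos.mpr hi₀⟩
  have hC : 0 < C := pow_pos (mul_pos (by exact_mod_cast i₀.pos) (by positivity)) _
  have hT₀ := pow_apply_nonneg (one_add_apply_nonneg hΛ₀) (r - 1)
  have hTlo : ∀ i j, δ ≤ T i j := by
    simpa only [Fintype.card_fin] using pow_card_sub_one_apply_ge hconn (by positivity)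
      (one_add_apply_nonneg hΛ₀) (min_le_one_add_apply_self hΛ₀)
      (fun _ _ => min_le_one_add_apply_of_adj hsym hsep)
  have hThi : ∀ i j, T i j ≤ C := by
    simpa only [Fintype.card_fin] using
      pow_apply_le (one_add_apply_nonneg hΛ₀) (one_add_apply_le hε hsep) (r - 1)
  have hv : t • (T *ᵥ |y|) ≤ Λ *ᵥ (T *ᵥ |y|) :=
    calc t • (T *ᵥ |y|) = T *ᵥ (t • |y|) := (mulVec_smul _ _ _).symm
      _ ≤ T *ᵥ (Λ *ᵥ |y|) := mulVec_mono hT₀ (smul_abs_le_mulVec_abs hΛ₀ ht hy)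
      _ = Λ *ᵥ (T *ᵥ |y|) := by
        rw [mulVec_mulVec, mulVec_mulVec,
          (((Commute.one_right Λ).add_right (Commute.refl Λ)).pow_right (r - 1)).eq]
  have key := mul_sum_le_mul_sum_mulVec (hsym.pow k) (pow_nonneg ht k)
    (pow_smul_le_pow_mulVec hΛ₀ ht hv k) (fun i => mul_sum_le_mulVec_apply ha (hTlo i))
    (fun i => mulVec_apply_le_mul_sum ha (hThi i)) hw
    (mulVec_nonneg (pow_apply_nonneg hΛ₀ k) hw)
  have hδC : harnackConst r ε = δ / C := by simp only [harnackConst, δ, C, div_pow]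
  rw [hδC, mul_div_assoc', div_mul_eq_mul_div, div_le_iff₀ hC]
  refine le_of_mul_le_mul_right ?_ hS
  calc t ^ k * δ * W * S = t ^ k * (δ * S) * W := by ring
    _ ≤ C * S * U := key
    _ = U * C * S := by ring

end TypeMatrix

-- `maxEig M = 0` when `M` has no real eigenvalue, hence `0 ≤ b`.
lemma exists_hasEigenvalue_gt_of_lt_maxEig {M : Matrix (Fin r) (Fin r) ℝ} {b : ℝ} (hb : 0 ≤ b)
    (h : b < maxEig M) : ∃ t, b < t ∧ Module.End.HasEigenvalue (toLin' M) t := by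
  have hne : {t : ℝ | Module.End.HasEigenvalue (toLin' M) t}.Nonempty := by
    by_contra hempty
    rw [Set.not_nonempty_iff_eq_empty] at hempty
    rw [maxEig, hempty, Real.sSup_empty] at h
    linarith
  obtain ⟨t, ht, hbt⟩ := exists_lt_of_lt_csSup hne h
  exact ⟨t, hbt, ht⟩

section Similarity

variable {n : Fin r → ℕ} (hn : ∀ i, 0 < n i) (Λ : Matrix (Fin r) (Fin r) ℝ)
include hn

lemma semiconjBy_diagonal_sqrt_mMat :
    SemiconjBy (diagonal fun i => √(n i : ℝ)) (mMat n Λ) Λ := by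
  ext i j
  have hi : √(n i : ℝ) ≠ 0 := (Real.sqrt_pos.mpr (by exact_mod_cast hn i)).ne'
  have hj : √(n j : ℝ) ≠ 0 := (Real.sqrt_pos.mpr (by exact_mod_cast hn j)).ne'
  simp only [diagonal_mul, mul_diagonal, mMat, pMat]
  rw [Real.sqrt_mul (Nat.cast_nonneg _)]
  field_simp
  rw [Real.sq_sqrt (Nat.cast_nonneg _)]

lemma sqrt_mul_mMat_pow_mulVec (k : ℕ) (z : Fin r → ℝ) (i : Fin r) :
    √(n i : ℝ) * (mMat n Λ ^ k *ᵥ z) i = (Λ ^ k *ᵥ fun j => √(n j : ℝ) * z j) i := by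
  have := congrFun (congrArg (· *ᵥ z) ((semiconjBy_diagonal_sqrt_mMat hn Λ).pow_right k).eq) i
  have hD (x : Fin r → ℝ) : (diagonal fun j => √(n j : ℝ)) *ᵥ x = fun j => √(n j : ℝ) * x j :=
    funext (mulVec_diagonal _ _)
  simpa only [← mulVec_mulVec, hD] using this

lemma exists_mulVec_eq_smul_of_hasEigenvalue_mMat {t : ℝ}
    (ht : Module.End.HasEigenvalue (toLin' (mMat n Λ)) t) : ∃ y ≠ 0, Λ *ᵥ y = t • y := by
  obtain ⟨x, hx⟩ := ht.exists_hasEigenvector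
  have hMx : mMat n Λ *ᵥ x = t • x := by simpa [toLin'_apply] using hx.apply_eq_smul
  set D := diagonal fun i => √(n i : ℝ)
  refine ⟨D *ᵥ x, fun h => hx.2 (funext fun i => ?_), ?_⟩
  · have hi : √(n i : ℝ) ≠ 0 := (Real.sqrt_pos.mpr (by exact_mod_cast hn i)).ne'
    simpa [D, mulVec_diagonal, hi] using congrFun h i
  · rw [mulVec_mulVec, ← (semiconjBy_diagonal_sqrt_mMat hn Λ).eq, ← mulVec_mulVec, hMx,
      mulVec_smul]

end Similarity

lemma sq_mul_sum_sq_le_card_mul_sum_sq {ι : Type*} [Fintype ι] {γ : ℝ} (hγ : 0 ≤ γ)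
    {u w : ι → ℝ} (hw : 0 ≤ w) (h : γ * ∑ i, w i ≤ ∑ i, u i) :
    γ ^ 2 * ∑ i, w i ^ 2 ≤ Fintype.card ι * ∑ i, u i ^ 2 :=
  calc γ ^ 2 * ∑ i, w i ^ 2 ≤ γ ^ 2 * (∑ i, w i) ^ 2 := by
        gcongr; exact Finset.sum_sq_le_sq_sum_of_nonneg fun i _ => hw i
    _ = (γ * ∑ i, w i) ^ 2 := by ring
    _ ≤ (∑ i, u i) ^ 2 := by gcongr; exact mul_nonneg hγ (Finset.sum_nonneg fun i _ => hw i)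
    _ ≤ Fintype.card ι * ∑ i, u i ^ 2 := by
        simpa using sq_sum_le_card_mul_sum_sq (s := .univ) (f := u)

lemma sum_mul_sq_mul_sum_sq_le {A : ℕ} {n : Fin r → ℕ} (hbal : Balanced A n) (x y : Fin r → ℝ) :
    (∑ i, (n i : ℝ) * x i ^ 2) * ∑ j, y j ^ 2 ≤
      A * (∑ i, x i ^ 2) * ∑ j, (n j : ℝ) * y j ^ 2 := by
  rw [Finset.sum_mul_sum, mul_assoc, Finset.sum_mul_sum, Finset.mul_sum]
  refine Finset.sum_le_sum fun i _ => ?_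
  rw [Finset.mul_sum]
  refine Finset.sum_le_sum fun j _ => ?_
  have h : (n i : ℝ) ≤ A * n j := by exact_mod_cast hbal i j
  calc (n i : ℝ) * x i ^ 2 * y j ^ 2 ≤ A * n j * x i ^ 2 * y j ^ 2 := by gcongr
    _ = A * (x i ^ 2 * (n j * y j ^ 2)) := by ring

lemma two_mul_euclNorm_le_of_balanced {A : ℕ} {n : Fin r → ℕ} (hn : ∀ i, 0 < n i)
    (hbal : Balanced A n) {γ : ℝ} (hγ : 4 * r * A + 1 ≤ γ) {z m : Fin r → ℝ} (hz : 0 ≤ z)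
    (h : γ * ∑ i, √(n i : ℝ) * z i ≤ ∑ i, √(n i : ℝ) * m i) :
    2 * euclNorm z ≤ euclNorm m := by
  have hsq (x : Fin r → ℝ) (i : Fin r) : (√(n i : ℝ) * x i) ^ 2 = n i * x i ^ 2 := by
    rw [mul_pow, Real.sq_sqrt (Nat.cast_nonneg _)]
  set Qz := ∑ i, z i ^ 2
  set Qm := ∑ i, m i ^ 2
  set Nz := ∑ i, (n i : ℝ) * z i ^ 2
  set Nm := ∑ i, (n i : ℝ) * m i ^ 2
  have hrA : (0 : ℝ) ≤ r * A := by positivity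
  have hγ₁ : 4 * r * A + 1 ≤ γ ^ 2 := by nlinarith
  have hgrowth : γ ^ 2 * Nz ≤ r * Nm := by
    simpa only [hsq, Fintype.card_fin] using sq_mul_sum_sq_le_card_mul_sum_sq (by linarith)
      (fun i => mul_nonneg (Real.sqrt_nonneg _) (hz i)) h
  have hbal' := sum_mul_sq_mul_sum_sq_le hbal m z
  have hQz : 0 ≤ Qz := Finset.sum_nonneg fun i _ => sq_nonneg _
  have hQm : 0 ≤ Qm := Finset.sum_nonneg fun i _ => sq_nonneg _
  have hQzNz : Qz ≤ Nz := Finset.sum_le_sum fun i _ =>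
    le_mul_of_one_le_left (sq_nonneg _) (by exact_mod_cast hn i)
  have hkey : (4 * r * A + 1) * Nz * Qz ≤ r * A * Qm * Nz :=
    calc (4 * r * A + 1) * Nz * Qz ≤ γ ^ 2 * Nz * Qz := by gcongr
      _ ≤ r * Nm * Qz := by gcongr
      _ ≤ r * (A * Qm * Nz) := by rw [mul_assoc]; gcongr
      _ = r * A * Qm * Nz := by ring
  have h4 : 4 * Qz ≤ Qm := by
    -- otherwise `hkey` forces `Nz * Qz ≤ 0`, hence `Qz = 0` as `Qz ≤ Nz`
    by_contra! hlt
    have hNzQz : Nz * Qz ≤ 0 := by nlinarith [mul_nonneg hrA (hQz.trans hQzNz)]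
    nlinarith [mul_le_mul_of_nonneg_right hQzNz hQz]
  rw [euclNorm, euclNorm, ← Real.sqrt_mul_self zero_le_two, ← Real.sqrt_mul (by norm_num)]
  exact Real.sqrt_le_sqrt (by linarith)

/-- in the super-critical case there is `k` with `‖M^k z‖₂ ≥ 2‖z‖₂` for all
nonnegative vectors `z`. -/
theorem pump_doubling (A r : ℕ) (ε : ℝ) (hε : 0 < ε) :
    ∃ k : ℕ, ∀ (n : Fin r → ℕ) (Λ : Matrix (Fin r) (Fin r) ℝ),
      (∀ i, 0 < n i) → Λ.IsSymm → (∀ i j, 0 ≤ Λ i j) →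
      Balanced A n → ConnectedTypes Λ → Separated ε Λ →
      1 + ε ≤ maxEig (mMat n Λ) →
      ∀ z : Fin r → ℝ, (∀ i, 0 ≤ z i) →
        2 * euclNorm z ≤ euclNorm ((mMat n Λ ^ k).mulVec z) := by
  have hκ := harnackConst_pos (r := r) hε
  obtain ⟨k, hk⟩ := pow_unbounded_of_one_lt ((4 * r * A + 1) / harnackConst r ε)
    (by linarith : (1 : ℝ) < 1 + ε / 2)
  refine ⟨k, fun n Λ hn hsym hΛ₀ hbal hconn hsep hρ z hz => ?_⟩
  obtain ⟨t, ht, htM⟩ := exists_hasEigenvalue_gt_of_lt_maxEig (M := mMat n Λ) (b := 1 + ε / 2)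
    (by positivity) (by linarith)
  obtain ⟨y, hy₀, hy⟩ := exists_mulVec_eq_smul_of_hasEigenvalue_mMat hn Λ htM
  have hw : 0 ≤ fun i => √(n i : ℝ) * z i := fun i => mul_nonneg (Real.sqrt_nonneg _) (hz i)
  have hgrowth :=
    pow_mul_harnackConst_mul_sum_le hΛ₀ hsym hconn hε hsep (by linarith) hy₀ hy k hw
  simp only [← sqrt_mul_mMat_pow_mulVec hn] at hgrowth
  refine two_mul_euclNorm_le_of_balanced hn hbal ?_ hz hgrowth
  calc 4 * r * A + 1 ≤ (1 + ε / 2) ^ k * harnackConst r ε := (div_le_iff₀ hκ).mp hk.le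
    _ ≤ t ^ k * harnackConst r ε := by gcongr

end Pandemic
end

section
/- For all A, r ∈ ℕ and ε > 0 there exist δ > 0 and N ∈ ℕ such that the following holds. Suppose n = n_1+⋯+n_r ≥ N, (n_1,…,n_r) is A-balanced, Λ is connected and ε-separated, and ρ(M) ≥ 1 + ε. Then there is no vector α ∈ [0,1]^r with α ≠ (1,…,1) satisfying f(α) = α and α_i ≥ 1 − δ for all i ∈ [r]. (Equivalently, every fixed point of f in [0,1]^r other than the all-ones vector has some coordinate at most 1 − δ.) -/
/-!
Put `x = 1 - α`. Since `1 - t ≤ exp (-t)`, a fixed point satisfies `1 - x ≤ exp (-M x)`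
coordinatewise, and once every `x i ≤ δ` the quadratic error of `exp` is small enough to give
`M x ≤ (1 + ε/2) x`. A zero coordinate of such a subsolution of a nonnegative matrix propagates to
its neighbours in the type graph, so by connectivity `x` is strictly positive; and a positive
vector with `M x ≤ c x` bounds every real eigenvalue of `M` by `c` (Collatz–Wielandt), which
contradicts `ρ(M) ≥ 1 + ε`.
-/

open MeasureTheory Matrix

namespace Pandemic

variable {r : ℕ}

/-- The multi-type binomial probability generating function
`f_i(z) = ∏_ℓ ((1 - p_{iℓ}) + p_{iℓ} z_ℓ)^{n_ℓ}`. -/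
noncomputable def genF (n : Fin r → ℕ) (Λ : Matrix (Fin r) (Fin r) ℝ)
    (z : Fin r → ℝ) (i : Fin r) : ℝ :=
  ∏ l, ((1 - pMat n Λ i l) + pMat n Λ i l * z l) ^ (n l)

open Finset

section NonnegMatrix

variable {ι : Type*} [Fintype ι] {M : Matrix ι ι ℝ} {x : ι → ℝ} {c : ℝ}

theorem abs_le_of_hasEigenvalue_of_mulVec_le [DecidableEq ι] (hM : ∀ i j, 0 ≤ M i j)
    (hx : ∀ i, 0 < x i) (hMx : M *ᵥ x ≤ c • x) {t : ℝ}
    (ht : Module.End.HasEigenvalue (toLin' M) t) : |t| ≤ c := by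
  obtain ⟨v, hv, hv0⟩ : ∃ v, M *ᵥ v = t • v ∧ v ≠ 0 := by
    simpa [Module.End.hasEigenvector_iff] using ht.exists_hasEigenvector
  obtain ⟨k, hk⟩ := Function.ne_iff.mp hv0
  obtain ⟨i, -, hi⟩ := exists_max_image univ (fun i => |v i| / x i) ⟨k, mem_univ k⟩
  set s := |v i| / x i
  have hvs : ∀ j, |v j| ≤ s * x j := fun j => (div_le_iff₀ (hx j)).1 (hi j (mem_univ j))
  have hs : 0 < s := (div_pos (abs_pos.2 hk) (hx k)).trans_le (hi k (mem_univ k))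
  have hvi : |v i| = s * x i := (div_mul_cancel₀ _ (hx i).ne').symm
  refine le_of_mul_le_mul_right ?_ (mul_pos hs (hx i))
  calc |t| * (s * x i) = |(M *ᵥ v) i| := by rw [hv, ← hvi]; simp [abs_mul]
    _ ≤ ∑ j, M i j * |v j| := by
        simpa [mulVec, dotProduct, abs_mul, abs_of_nonneg (hM i _)] using
          abs_sum_le_sum_abs (fun j => M i j * v j) univ
    _ ≤ ∑ j, M i j * (s * x j) := sum_le_sum fun j _ => mul_le_mul_of_nonneg_left (hvs j) (hM i j)
    _ = s * (M *ᵥ x) i := by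
        simp only [mulVec, dotProduct, mul_sum]
        exact sum_congr rfl fun j _ => by ring
    _ ≤ s * (c * x i) := mul_le_mul_of_nonneg_left (hMx i) hs.le
    _ = c * (s * x i) := by ring

theorem mulVec_apply_le_card_mul {B δ : ℝ} (hB : ∀ i j, M i j ≤ B) (hB0 : 0 ≤ B) (hx0 : 0 ≤ x)
    (hxδ : ∀ i, x i ≤ δ) (i : ι) : (M *ᵥ x) i ≤ Fintype.card ι * B * δ := by
  rw [mul_assoc, ← nsmul_eq_mul]
  exact sum_le_card_nsmul _ _ _ fun j _ => mul_le_mul (hB i j) (hxδ j) (hx0 j) hB0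

theorem pos_of_mulVec_le_of_connected {G : SimpleGraph ι} (hG : G.Connected)
    (hM : ∀ i j, 0 ≤ M i j) (hadj : ∀ i j, G.Adj i j → 0 < M i j) (hx : 0 ≤ x)
    (hMx : M *ᵥ x ≤ c • x) (hne : x ≠ 0) (i : ι) : 0 < x i := by
  have hstep : ∀ a b, G.Adj a b → 0 < x b → 0 < x a := by
    intro a b hab hb
    by_contra! ha
    have hMxa : (M *ᵥ x) a ≤ 0 := by simpa [le_antisymm ha (hx a)] using hMx a
    have hterm : M a b * x b ≤ (M *ᵥ x) a :=
      single_le_sum (f := fun j => M a j * x j) (fun j _ => mul_nonneg (hM a j) (hx j))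
        (mem_univ b)
    linarith [mul_pos (hadj a b hab) hb]
  obtain ⟨k, hk⟩ := Function.ne_iff.mp hne
  obtain ⟨w⟩ := hG.preconnected i k
  induction w with
  | nil => exact (hx _).lt_of_ne' hk
  | cons hab _ ih => exact hstep _ _ hab (ih hk)

end NonnegMatrix

theorem maxEig_le_of_mulVec_le {M : Matrix (Fin r) (Fin r) ℝ} {x : Fin r → ℝ} {c : ℝ}
    (hM : ∀ i j, 0 ≤ M i j) (hx : ∀ i, 0 < x i) (hMx : M *ᵥ x ≤ c • x) (hc : 0 ≤ c) :
    maxEig M ≤ c :=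
  Real.sSup_le (fun _ ht => (le_abs_self _).trans
    (abs_le_of_hasEigenvalue_of_mulVec_le hM hx hMx ht)) hc

theorem sub_sq_le_one_sub_exp_neg {y : ℝ} (hy0 : 0 ≤ y) (hy1 : y ≤ 1) :
    y - y ^ 2 ≤ 1 - Real.exp (-y) := by
  have h := (abs_le.1 (Real.abs_exp_sub_one_sub_id_le (x := -y) (by simpa [abs_of_nonneg hy0]))).2
  linarith [neg_sq y]

section Model

variable {n : Fin r → ℕ} {Λ : Matrix (Fin r) (Fin r) ℝ}

theorem mMat_apply (n : Fin r → ℕ) (Λ : Matrix (Fin r) (Fin r) ℝ) (i j : Fin r) :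
    mMat n Λ i j = Λ i j * √((n j : ℝ) / n i) := by
  rw [mMat, pMat, Real.sqrt_div' _ (Nat.cast_nonneg _), Real.sqrt_mul (Nat.cast_nonneg _)]
  rcases Nat.eq_zero_or_pos (n j) with h | h
  · simp [h]
  · have := Real.sqrt_pos.2 (Nat.cast_pos.2 h : (0 : ℝ) < n j)
    field_simp
    rw [Real.sq_sqrt (Nat.cast_nonneg _)]

theorem pMat_nonneg (hΛ : ∀ i j, 0 ≤ Λ i j) (i j : Fin r) : 0 ≤ pMat n Λ i j :=
  div_nonneg (hΛ i j) (Real.sqrt_nonneg _)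

theorem mMat_nonneg (hp0 : ∀ i j, 0 ≤ pMat n Λ i j) (i j : Fin r) : 0 ≤ mMat n Λ i j :=
  mul_nonneg (hp0 i j) (Nat.cast_nonneg _)

theorem mMat_le {A : ℕ} {ε : ℝ} (hε : 0 < ε) (hn : ∀ i, 0 < n i) (hbal : Balanced A n)
    (hsep : Separated ε Λ) (i j : Fin r) : mMat n Λ i j ≤ √A / ε := by
  have hΛ : Λ i j ≤ 1 / ε := (hsep i j).elim (fun h => h ▸ by positivity) fun h => h.2
  have hratio : (n j : ℝ) / n i ≤ A := by
    rw [div_le_iff₀ (by exact_mod_cast hn i)]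
    exact_mod_cast hbal j i
  calc mMat n Λ i j = Λ i j * √((n j : ℝ) / n i) := mMat_apply n Λ i j
    _ ≤ 1 / ε * √A := mul_le_mul hΛ (Real.sqrt_le_sqrt hratio) (Real.sqrt_nonneg _) (by positivity)
    _ = √A / ε := one_div_mul_eq_div _ _

theorem mMat_pos_of_adj (hn : ∀ i, 0 < n i) (hsymm : Λ.IsSymm) {i j : Fin r}
    (hij : (typeGraph Λ).Adj i j) : 0 < mMat n Λ i j := by
  have hΛ : 0 < Λ i j := hij.2.elim id fun h => hsymm.apply i j ▸ h
  rw [mMat_apply]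
  exact mul_pos hΛ (Real.sqrt_pos.2 (div_pos (by exact_mod_cast hn j) (by exact_mod_cast hn i)))

theorem genF_le_exp_neg_mulVec (hp0 : ∀ i j, 0 ≤ pMat n Λ i j) (hp1 : ∀ i j, pMat n Λ i j ≤ 1)
    {z : Fin r → ℝ} (hz : 0 ≤ z) (i : Fin r) :
    genF n Λ z i ≤ Real.exp (-(mMat n Λ *ᵥ (1 - z)) i) := by
  have hbase : ∀ l, 0 ≤ 1 - pMat n Λ i l + pMat n Λ i l * z l := fun l => by
    nlinarith [hp1 i l, mul_nonneg (hp0 i l) (hz l)]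
  have hexp : ∀ l, 1 - pMat n Λ i l + pMat n Λ i l * z l
      ≤ Real.exp (-(pMat n Λ i l * (1 - z l))) := fun l => by
    linarith [Real.add_one_le_exp (-(pMat n Λ i l * (1 - z l)))]
  calc genF n Λ z i ≤ ∏ l, Real.exp (-(pMat n Λ i l * (1 - z l))) ^ n l :=
        prod_le_prod (fun l _ => pow_nonneg (hbase l) _) fun l _ =>
          pow_le_pow_left₀ (hbase l) (hexp l) _
    _ = Real.exp (-(mMat n Λ *ᵥ (1 - z)) i) := by
        simp only [← Real.exp_nat_mul, ← Real.exp_sum, mulVec, dotProduct, mMat, ← sum_neg_distrib]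
        congr 1
        exact sum_congr rfl fun l _ => by simp only [Pi.sub_apply, Pi.one_apply]; ring

theorem mMat_mulVec_one_sub_le_smul (hp0 : ∀ i j, 0 ≤ pMat n Λ i j)
    (hp1 : ∀ i j, pMat n Λ i j ≤ 1) {α : Fin r → ℝ} (hα0 : 0 ≤ α) (hα1 : α ≤ 1)
    (hfix : ∀ i, genF n Λ α i = α i) {c : ℝ} (hc : 0 < c)
    (hy : ∀ i, (mMat n Λ *ᵥ (1 - α)) i ≤ 1 - c⁻¹) :
    mMat n Λ *ᵥ (1 - α) ≤ c • (1 - α) := by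
  intro i
  set y := (mMat n Λ *ᵥ (1 - α)) i
  have hy0 : 0 ≤ y := by
    simp only [y, mulVec, dotProduct]
    exact sum_nonneg fun l _ => mul_nonneg (mMat_nonneg hp0 i l) (sub_nonneg.2 (hα1 l))
  have hcy : c⁻¹ * y ≤ 1 - α i := calc
    c⁻¹ * y ≤ y - y ^ 2 := by nlinarith [hy i]
    _ ≤ 1 - Real.exp (-y) :=
        sub_sq_le_one_sub_exp_neg hy0 ((hy i).trans (by linarith [inv_pos.2 hc]))
    _ ≤ 1 - α i := by linarith [hfix i ▸ genF_le_exp_neg_mulVec hp0 hp1 hα0 i]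
  simpa using (inv_mul_le_iff₀ hc).1 hcy

end Model

/-- in the super-critical case, every fixed point of `f` in `[0,1]^r` other
than the all-ones vector has some coordinate at most `1 - δ`. -/
theorem fixed_point_coordinate_bound (A r : ℕ) (ε : ℝ) (hε : 0 < ε) :
    ∃ δ > 0, ∃ N : ℕ, ∀ (n : Fin r → ℕ) (Λ : Matrix (Fin r) (Fin r) ℝ),
      (∀ i, 0 < n i) → Λ.IsSymm → (∀ i j, 0 ≤ Λ i j) →
      (∀ i j, pMat n Λ i j ≤ 1) →
      N ≤ ∑ k, n k → Balanced A n → ConnectedTypes Λ → Separated ε Λ →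
      1 + ε ≤ maxEig (mMat n Λ) →
      ∀ α : Fin r → ℝ, (∀ i, 0 ≤ α i ∧ α i ≤ 1) →
        (∀ i, genF n Λ α i = α i) → α ≠ (fun _ => 1) →
        ∃ i, α i ≤ 1 - δ := by
  set c : ℝ := 1 + ε / 2 with hc
  set δ : ℝ := (1 - c⁻¹) / (r * (√A / ε) + 1) with hδ
  have hη : 0 < 1 - c⁻¹ := sub_pos.2 (inv_lt_one_of_one_lt₀ (by linarith))
  have hrδ : r * (√A / ε) * δ ≤ 1 - c⁻¹ := by
    rw [hδ, mul_div_assoc', div_le_iff₀ (by positivity)]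
    nlinarith
  refine ⟨δ, by positivity, 0, ?_⟩
  intro n Λ hn hsymm hΛ hp1 _ hbal hconn hsep hρ α hα hfix hne
  by_contra! hfar
  have hp0 := pMat_nonneg (n := n) hΛ
  have hx0 : 0 ≤ 1 - α := fun i => sub_nonneg.2 (hα i).2
  have hxδ : ∀ i, (1 - α) i ≤ δ := fun i => by
    simp only [Pi.sub_apply, Pi.one_apply]
    linarith [hfar i]
  have hy : ∀ i, (mMat n Λ *ᵥ (1 - α)) i ≤ 1 - c⁻¹ := fun i =>
    (mulVec_apply_le_card_mul (mMat_le hε hn hbal hsep) (by positivity) hx0 hxδ i).trans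
      (by rwa [Fintype.card_fin])
  have hsub := mMat_mulVec_one_sub_le_smul hp0 hp1 (fun i => (hα i).1) (fun i => (hα i).2) hfix
    (by positivity) hy
  have hpos := pos_of_mulVec_le_of_connected hconn (mMat_nonneg hp0)
    (fun _ _ => mMat_pos_of_adj hn hsymm) hx0 hsub (sub_ne_zero.2 (Ne.symm hne))
  linarith [maxEig_le_of_mulVec_le (mMat_nonneg hp0) hpos hsub (by positivity)]

end Pandemic
end

section
/- For all A, r ∈ ℕ and ε > 0 there exists N ∈ ℕ such that the following holds. Suppose n = n_1+⋯+n_r ≥ N, (n_1,…,n_r) is A-balanced, Λ is ε-separated, and ρ(M) ≥ 1 + ε. Define the matrix Q by Q_{i,j} = (n_j − n^{0.999})·p_{i,j}. Then |ρ(M) − ρ(Q)| ≤ ε/2; in particular ρ(Q) ≥ 1 + ε/2. -/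
/-! Conjugating by `diag (√n_i)` turns `M` into the symmetric matrix `Λ`, and conjugating `Q` by
`diag (√(n_i - n^0.999))` turns it into the symmetric matrix `(√(1 - δ_i) λ_ij √(1 - δ_j))`,
where `δ_i = n^0.999 / n_i ≤ r A n^(-0.001)` by balancedness. The two symmetric matrices differ
entrywise by at most `2 r A n^(-0.001) / ε`, and the top eigenvalue of a symmetric matrix, being
the supremum of its Rayleigh quotient, moves by at most `r` times the largest entrywise change. -/

open MeasureTheory Matrix

section Rayleigh

open scoped RealInnerProductSpace

variable {E : Type*} [NormedAddCommGroup E] [InnerProductSpace ℝ E] [FiniteDimensional ℝ E]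
  {T T' : E →ₗ[ℝ] E}

lemma LinearMap.bddAbove_rayleigh (T : E →ₗ[ℝ] E) :
    BddAbove (Set.range fun x : {x : E // x ≠ 0} => ⟪T x, x⟫ / ‖(x : E)‖ ^ 2) :=
  ⟨‖LinearMap.toContinuousLinearMap T‖, by
    rintro _ ⟨x, rfl⟩
    exact (le_abs_self _).trans ((LinearMap.toContinuousLinearMap T).rayleighQuotient_le_norm x)⟩

lemma LinearMap.IsSymmetric.isGreatest_spectrum [Nontrivial E] (hT : T.IsSymmetric) :
    IsGreatest (spectrum ℝ T) (⨆ x : {x : E // x ≠ 0}, ⟪T x, x⟫ / ‖(x : E)‖ ^ 2) := by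
  refine ⟨Module.End.hasEigenvalue_iff_mem_spectrum.1 hT.hasEigenvalue_iSup_of_finiteDimensional,
    fun t ht => ?_⟩
  obtain ⟨v, hv⟩ := (Module.End.hasEigenvalue_iff_mem_spectrum.2 ht).exists_hasEigenvector
  have hv0 : ‖v‖ ^ 2 ≠ 0 := by simpa using hv.2
  calc t = ⟪T v, v⟫ / ‖v‖ ^ 2 := by
        rw [hv.apply_eq_smul, real_inner_smul_left, real_inner_self_eq_norm_sq,
          mul_div_cancel_right₀ _ hv0]
    _ ≤ _ := le_ciSup T.bddAbove_rayleigh ⟨v, hv.2⟩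

lemma LinearMap.IsSymmetric.sSup_spectrum_le_add (hT : T.IsSymmetric)
    (hT' : T'.IsSymmetric) {δ : ℝ} (hδ : 0 ≤ δ) (h : ∀ x, ⟪(T - T') x, x⟫ ≤ δ * ‖x‖ ^ 2) :
    sSup (spectrum ℝ T) ≤ sSup (spectrum ℝ T') + δ := by
  rcases subsingleton_or_nontrivial E with hE | hE
  · simp [spectrum.of_subsingleton, hδ]
  rw [hT.isGreatest_spectrum.csSup_eq, hT'.isGreatest_spectrum.csSup_eq]
  have : Nonempty {x : E // x ≠ 0} := nonempty_subtype.2 (exists_ne 0)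
  refine ciSup_le fun x => ?_
  have hx : 0 < ‖(x : E)‖ ^ 2 := pow_pos (norm_pos_iff.2 x.2) 2
  have hsplit : ⟪T x, x⟫ = ⟪T' x, x⟫ + ⟪(T - T') x, x⟫ := by
    rw [LinearMap.sub_apply, inner_sub_left]; ring
  rw [hsplit, add_div]
  gcongr
  · exact le_ciSup T'.bddAbove_rayleigh x
  · exact (div_le_iff₀ hx).2 (h x)

end Rayleigh

namespace Matrix

open scoped RealInnerProductSpace

variable {ι : Type*}

lemma IsSymm.isHermitian_of_mul_mul {Λ : Matrix ι ι ℝ} (hΛ : Λ.IsSymm) (a : ι → ℝ) :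
    (of fun i j => a i * Λ i j * a j).IsHermitian := by
  ext i j
  simp only [conjTranspose_apply, of_apply, hΛ.apply i j, star_trivial]
  ring

variable [Fintype ι] [DecidableEq ι]

lemma spectrum_of_mul_div {K : Type*} [Field K] (B : Matrix ι ι K) {d : ι → K}
    (hd : ∀ i, d i ≠ 0) : spectrum K (of fun i j => B i j * d j / d i) = spectrum K B := by
  let u : (Matrix ι ι K)ˣ := ⟨diagonal d⁻¹, diagonal d, by simp [hd], by simp [hd]⟩
  have hu : of (fun i j => B i j * d j / d i) = u.val * B * u⁻¹.val := by
    ext i j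
    simp only [of_apply, Units.inv_mk, mul_diagonal, diagonal_mul, Pi.inv_apply, u]
    ring
  rw [hu, spectrum.units_conjugate]

lemma inner_toLpLin_self_le (B : Matrix ι ι ℝ) {C : ℝ} (hC : 0 ≤ C) (h : ∀ i j, |B i j| ≤ C)
    (x : EuclideanSpace ℝ ι) : ⟪toLpLin 2 2 B x, x⟫ ≤ Fintype.card ι * C * ‖x‖ ^ 2 := by
  calc ⟪toLpLin 2 2 B x, x⟫ = ∑ i, ∑ j, B i j * x j * x i := by
        simp [toLpLin_apply, PiLp.inner_apply, mulVec, dotProduct, Finset.mul_sum, mul_comm,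
          mul_left_comm]
    _ ≤ ∑ i, ∑ j, C * (|x i| * |x j|) := by
        refine Finset.sum_le_sum fun i _ => Finset.sum_le_sum fun j _ => ?_
        calc B i j * x j * x i ≤ |B i j| * (|x i| * |x j|) := by
              rw [← abs_mul, ← abs_mul, mul_assoc, mul_comm (x i)]; exact le_abs_self _
          _ ≤ C * (|x i| * |x j|) := by gcongr; exact h i j
    _ = C * (∑ i, |x i|) ^ 2 := by
        simp_rw [sq, Finset.sum_mul_sum, Finset.mul_sum]
    _ ≤ C * (Fintype.card ι * ∑ i, |x i| ^ 2) := by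
        gcongr; exact sq_sum_le_card_mul_sum_sq
    _ = Fintype.card ι * C * ‖x‖ ^ 2 := by
        rw [EuclideanSpace.norm_sq_eq]; simp only [Real.norm_eq_abs]; ring

lemma abs_sSup_spectrum_sub_le {S S' : Matrix ι ι ℝ} (hS : S.IsHermitian)
    (hS' : S'.IsHermitian) {C : ℝ} (hC : 0 ≤ C) (h : ∀ i j, |S i j - S' i j| ≤ C) :
    |sSup (spectrum ℝ S) - sSup (spectrum ℝ S')| ≤ Fintype.card ι * C := by
  have hform : ∀ {A B : Matrix ι ι ℝ}, (∀ i j, |A i j - B i j| ≤ C) →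
      ∀ x, ⟪(toLpLin 2 2 A - toLpLin 2 2 B) x, x⟫ ≤ Fintype.card ι * C * ‖x‖ ^ 2 :=
    fun hAB x => by
      rw [← map_sub]
      exact inner_toLpLin_self_le _ hC (fun i j => by simpa using hAB i j) x
  have hT := isSymmetric_toEuclideanLin_iff.2 hS
  have hT' := isSymmetric_toEuclideanLin_iff.2 hS'
  rw [← spectrum_toLpLin (A := S) 2, ← spectrum_toLpLin (A := S') 2, abs_sub_le_iff]
  constructor
  · linarith [hT.sSup_spectrum_le_add hT' (by positivity) (hform h)]
  · linarith [hT'.sSup_spectrum_le_add hT (by positivity)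
      (hform fun i j => abs_sub_comm (S i j) (S' i j) ▸ h i j)]

end Matrix

lemma abs_sub_sqrt_mul_mul_sqrt_le {x y z : ℝ} (hx0 : 0 ≤ x) (hx1 : x ≤ 1) (hy0 : 0 ≤ y)
    (hy1 : y ≤ 1) (hz : 0 ≤ z) : |z - √(1 - x) * z * √(1 - y)| ≤ z * (x + y) := by
  have ha := Real.sq_sqrt (sub_nonneg.2 hx1)
  have hb := Real.sq_sqrt (sub_nonneg.2 hy1)
  have ha1 : √(1 - x) ≤ 1 := Real.sqrt_le_one.2 (by linarith)
  have hb1 : √(1 - y) ≤ 1 := Real.sqrt_le_one.2 (by linarith)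
  have ha0 := Real.sqrt_nonneg (1 - x)
  have hb0 := Real.sqrt_nonneg (1 - y)
  have hab : √(1 - x) * √(1 - y) ≤ 1 := mul_le_one₀ ha1 hb0 hb1
  rw [abs_of_nonneg (by nlinarith)]
  nlinarith [mul_nonneg (sub_nonneg.2 ha1) (sub_nonneg.2 hb1), mul_nonneg ha0 (sub_nonneg.2 ha1),
    mul_nonneg hb0 (sub_nonneg.2 hb1)]

lemma exists_le_rpow_natCast (K : ℝ) {y : ℝ} (hy : 0 < y) :
    ∃ N : ℕ, ∀ m : ℕ, N ≤ m → K ≤ (m : ℝ) ^ y :=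
  Filter.eventually_atTop.1
    (((tendsto_rpow_atTop hy).comp tendsto_natCast_atTop_atTop).eventually_ge_atTop K)

namespace Pandemic

variable {r : ℕ}

lemma maxEig_eq_sSup_spectrum (M : Matrix (Fin r) (Fin r) ℝ) :
    maxEig M = sSup (spectrum ℝ M) := by
  rw [maxEig, ← spectrum_toLin']
  simp only [Module.End.hasEigenvalue_iff_mem_spectrum, Set.ofPred_mem_eq]

lemma maxEig_depleted (Λ : Matrix (Fin r) (Fin r) ℝ) {n : Fin r → ℕ} (hn : ∀ i, 0 < n i)
    {c : Fin r → ℝ} (hc : ∀ i, c i < n i) :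
    maxEig (fun i j => ((n j : ℝ) - c j) * pMat n Λ i j) =
      maxEig (of fun i j => √(1 - c i / n i) * Λ i j * √(1 - c j / n j)) := by
  have hn' : ∀ i, (0 : ℝ) < n i := fun i => Nat.cast_pos.2 (hn i)
  have hm : ∀ i, 0 < (n i : ℝ) - c i := fun i => sub_pos.2 (hc i)
  have hsq : ∀ k, √(1 - c k / n k) = √((n k : ℝ) - c k) / √(n k : ℝ) := fun k => by
    rw [← Real.sqrt_div (hm k).le, one_sub_div (hn' k).ne']
  have hQ : (fun i j => ((n j : ℝ) - c j) * pMat n Λ i j) =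
      of fun i j => √(1 - c i / n i) * Λ i j * √(1 - c j / n j) * √((n j : ℝ) - c j) /
        √((n i : ℝ) - c i) := by
    ext i j
    have := Real.sqrt_pos.2 (hm i)
    have := Real.sqrt_pos.2 (hn' i)
    have := Real.sqrt_pos.2 (hn' j)
    rw [of_apply, pMat, hsq, hsq, Real.sqrt_mul (hn' i).le]
    field_simp
    rw [Real.sq_sqrt (hm j).le, mul_comm]
  rw [hQ, maxEig_eq_sSup_spectrum, maxEig_eq_sSup_spectrum]
  exact congrArg sSup (spectrum_of_mul_div (of fun i j => √(1 - c i / n i) * Λ i j *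
    √(1 - c j / n j)) fun i => (Real.sqrt_pos.2 (hm i)).ne')

lemma maxEig_mMat (Λ : Matrix (Fin r) (Fin r) ℝ) {n : Fin r → ℕ} (hn : ∀ i, 0 < n i) :
    maxEig (mMat n Λ) = maxEig Λ := by
  have h := maxEig_depleted Λ hn (c := 0) fun i => Nat.cast_pos.2 (hn i)
  simp only [Pi.zero_apply, sub_zero, zero_div, Real.sqrt_one, one_mul, mul_one] at h
  calc maxEig (mMat n Λ) = maxEig (fun i j => (n j : ℝ) * pMat n Λ i j) := by
        congr 1
        ext i j
        exact mul_comm _ _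
    _ = maxEig Λ := h

lemma Separated.le_one_div {ε : ℝ} (hε : 0 < ε) {Λ : Matrix (Fin r) (Fin r) ℝ}
    (h : Separated ε Λ) (i j : Fin r) : Λ i j ≤ 1 / ε := by
  rcases h i j with h | h
  · rw [h]; positivity
  · exact h.2

lemma Balanced.sum_le {A : ℕ} {n : Fin r → ℕ} (h : Balanced A n) (i : Fin r) :
    ∑ k, n k ≤ r * A * n i :=
  calc ∑ k, n k ≤ ∑ _k : Fin r, A * n i := Finset.sum_le_sum fun k _ => h k i
    _ = r * A * n i := by simp [mul_assoc]

lemma Balanced.rpow_sum_div_le {A : ℕ} {n : Fin r → ℕ} (h : Balanced A n)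
    (hn : ∀ i, 0 < n i) {a b : ℝ} (hab : a + b = 1) (i : Fin r) :
    ((∑ k, n k : ℕ) : ℝ) ^ a / n i ≤ r * A / ((∑ k, n k : ℕ) : ℝ) ^ b := by
  have hi : (0 : ℝ) < n i := Nat.cast_pos.2 (hn i)
  have hs : (0 : ℝ) < ((∑ k, n k : ℕ) : ℝ) :=
    Nat.cast_pos.2 ((hn i).trans_le (Finset.single_le_sum (by simp) (Finset.mem_univ i)))
  rw [div_le_div_iff₀ hi (by positivity), ← Real.rpow_add hs, hab, Real.rpow_one]
  exact_mod_cast h.sum_le i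

lemma abs_maxEig_mMat_sub_depleted_le {ε : ℝ} (hε : 0 < ε) {n : Fin r → ℕ} (hn : ∀ i, 0 < n i)
    {Λ : Matrix (Fin r) (Fin r) ℝ} (hsym : Λ.IsSymm) (hnn : ∀ i j, 0 ≤ Λ i j)
    (hsep : Separated ε Λ) {c δ : ℝ} (hc : 0 ≤ c) (hcδ : ∀ i, c / n i ≤ δ) (hδ0 : 0 ≤ δ)
    (hδ1 : δ < 1) :
    |maxEig (mMat n Λ) - maxEig (fun i j => ((n j : ℝ) - c) * pMat n Λ i j)| ≤
      2 * r * δ / ε := by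
  have hn' : ∀ i, (0 : ℝ) < n i := fun i => Nat.cast_pos.2 (hn i)
  have hle : ∀ i, c / n i ≤ 1 := fun i => (hcδ i).trans hδ1.le
  have hentry : ∀ i j, |Λ i j - √(1 - c / n i) * Λ i j * √(1 - c / n j)| ≤ 1 / ε * (2 * δ) :=
    fun i j => (abs_sub_sqrt_mul_mul_sqrt_le (by positivity) (hle i) (by positivity) (hle j)
      (hnn i j)).trans <| mul_le_mul (hsep.le_one_div hε i j) (by linarith [hcδ i, hcδ j])
        (by positivity) (by positivity)
  rw [maxEig_mMat Λ hn, maxEig_depleted Λ hn (c := fun _ => c)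
    fun i => (div_lt_one (hn' i)).1 ((hcδ i).trans_lt hδ1),
    maxEig_eq_sSup_spectrum, maxEig_eq_sSup_spectrum]
  convert abs_sSup_spectrum_sub_le (isHermitian_iff_isSymm.2 hsym)
    (hsym.isHermitian_of_mul_mul _) (by positivity) hentry using 1
  simp only [Fintype.card_fin]
  ring

/-- with `Q_{ij} = (n_j - n^{0.999})·p_{ij}`, we have
`|ρ(M) - ρ(Q)| ≤ ε/2`; in particular `ρ(Q) ≥ 1 + ε/2`. -/
theorem depleted_matrix_still_supercritical (A r : ℕ) (ε : ℝ) (hε : 0 < ε) :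
    ∃ N : ℕ, ∀ (n : Fin r → ℕ) (Λ : Matrix (Fin r) (Fin r) ℝ),
      (∀ i, 0 < n i) → Λ.IsSymm → (∀ i j, 0 ≤ Λ i j) →
      N ≤ ∑ k, n k → Balanced A n → Separated ε Λ →
      1 + ε ≤ maxEig (mMat n Λ) →
      |maxEig (mMat n Λ) -
          maxEig (fun i j =>
            ((n j : ℝ) - ((∑ k, n k : ℕ) : ℝ) ^ (0.999 : ℝ)) * pMat n Λ i j)| ≤ ε / 2 ∧
      1 + ε / 2 ≤
        maxEig (fun i j =>
          ((n j : ℝ) - ((∑ k, n k : ℕ) : ℝ) ^ (0.999 : ℝ)) * pMat n Λ i j) := by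
  obtain ⟨N, hN⟩ := exists_le_rpow_natCast (max ((r : ℝ) * A + 1) (4 * r ^ 2 * A / ε ^ 2))
    (by norm_num : (0 : ℝ) < 0.001)
  refine ⟨N, fun n Λ hn hsym hnn hnN hbal hsep hM => ?_⟩
  set t : ℝ := ((∑ k, n k : ℕ) : ℝ) ^ (0.001 : ℝ)
  have ht : max ((r : ℝ) * A + 1) (4 * r ^ 2 * A / ε ^ 2) ≤ t := hN _ hnN
  have htA : (r : ℝ) * A + 1 ≤ t := (le_max_left _ _).trans ht
  have ht0 : 0 < t := by linarith [(by positivity : (0 : ℝ) ≤ r * A)]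
  have hbound := abs_maxEig_mMat_sub_depleted_le hε hn hsym hnn hsep (by positivity)
    (hbal.rpow_sum_div_le hn (by norm_num : (0.999 : ℝ) + 0.001 = 1)) (by positivity)
    ((div_lt_one ht0).2 (by linarith))
  have hsmall : 2 * r * (r * A / t) / ε ≤ ε / 2 := by
    have ht4 : 4 * r ^ 2 * A ≤ t * ε ^ 2 :=
      (div_le_iff₀ (by positivity)).1 ((le_max_right _ _).trans ht)
    calc 2 * r * (r * A / t) / ε = 4 * r ^ 2 * A / (2 * ε * t) := by
          field_simp; ring
      _ ≤ t * ε ^ 2 / (2 * ε * t) := by gcongr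
      _ = ε / 2 := by field_simp
  exact ⟨hbound.trans hsmall, by linarith [(abs_le.1 (hbound.trans hsmall)).2]⟩

end Pandemic
end
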